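/- arXiv:1802.04037 — 9 statements merged into one kernel-verified Lean document; each statement's English description precedes it below -/
import Mathlib

section
/- Every solution (x_1(t), x_2(t)) of the deterministic SIS competition system dx_1/dt = λ_1 x_1 (1 - x_1 - x_2) - μ_1 x_1, dx_2/dt = λ_2 x_2 (1 - x_1 - x_2) - μ_2 x_2 satisfies, for all t ≥ 0, the conservation relation x_1(t)^{λ_2} / x_2(t)^{λ_1} = (x_1(0)^{λ_2} / x_2(0)^{λ_1}) · exp((μ_2 λ_1 - μ_1 λ_2) t), provided x_1(0) > 0 and x_2(0) > 0. -/
/-!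
Both equations are linear in their own unknown: `xᵢ' = fᵢ · xᵢ` with the continuous coefficients
`fᵢ = λᵢ (1 - x₁ - x₂) - μᵢ`, so `xᵢ t = xᵢ 0 · exp (∫₀ᵗ fᵢ)`. The combination `λ₂ f₁ - λ₁ f₂`
cancels the common logistic factor and equals the constant `μ₂ λ₁ - μ₁ λ₂`, which is exactly the
exponent left in `x₁^{λ₂} / x₂^{λ₁}`.
-/

open Real

-- `x · exp (-∫₀ᵗ f)` has derivative zero, hence is constant.
theorem eq_mul_exp_integral_of_hasDerivAt_mul {f x : ℝ → ℝ} (hf : Continuous f)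
    (hx : ∀ t, HasDerivAt x (f t * x t) t) (t : ℝ) :
    x t = x 0 * exp (∫ s in (0 : ℝ)..t, f s) := by
  set G : ℝ → ℝ := fun t => ∫ s in (0 : ℝ)..t, f s
  have hG : ∀ t, HasDerivAt G (f t) t := fun t =>
    (hf.integral_hasStrictDerivAt 0 t).hasDerivAt
  have hderiv : ∀ t, HasDerivAt (fun t => x t * exp (-G t)) 0 t := fun t =>
    ((hx t).mul (hG t).neg.exp).congr_deriv (by ring)
  have hconst : x t * exp (-G t) = x 0 * exp (-G 0) :=
    is_const_of_deriv_eq_zero (fun s => (hderiv s).differentiableAt)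
      (fun s => (hderiv s).deriv) t 0
  have hG0 : G 0 = 0 := intervalIntegral.integral_same
  rw [hG0, neg_zero, exp_zero, mul_one] at hconst
  calc x t = x t * exp (-G t) * exp (G t) := by
        rw [mul_assoc, ← exp_add, neg_add_cancel, exp_zero, mul_one]
    _ = x 0 * exp (G t) := by rw [hconst]

theorem rpow_div_rpow_eq_mul_exp_of_hasDerivAt_mul {f g x y : ℝ → ℝ} {p q c : ℝ}
    (hf : Continuous f) (hg : Continuous g)
    (hx : ∀ t, HasDerivAt x (f t * x t) t) (hy : ∀ t, HasDerivAt y (g t * y t) t)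
    (hx0 : 0 < x 0) (hy0 : 0 < y 0) (hfg : ∀ t, p * f t - q * g t = c) (t : ℝ) :
    x t ^ p / y t ^ q = x 0 ^ p / y 0 ^ q * exp (c * t) := by
  have hexponent : (∫ s in (0 : ℝ)..t, f s) * p - (∫ s in (0 : ℝ)..t, g s) * q = c * t := by
    have hfi : IntervalIntegrable f MeasureTheory.volume 0 t := hf.intervalIntegrable 0 t
    have hgi : IntervalIntegrable g MeasureTheory.volume 0 t := hg.intervalIntegrable 0 t
    calc (∫ s in (0 : ℝ)..t, f s) * p - (∫ s in (0 : ℝ)..t, g s) * q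
        = ∫ s in (0 : ℝ)..t, (p * f s - q * g s) := by
          rw [intervalIntegral.integral_sub (hfi.const_mul p) (hgi.const_mul q),
            intervalIntegral.integral_const_mul, intervalIntegral.integral_const_mul]
          ring
      _ = c * t := by simp [hfg, mul_comm]
  rw [eq_mul_exp_integral_of_hasDerivAt_mul hf hx t, eq_mul_exp_integral_of_hasDerivAt_mul hg hy t,
    mul_rpow hx0.le (exp_pos _).le, mul_rpow hy0.le (exp_pos _).le, ← exp_mul, ← exp_mul,
    mul_div_mul_comm, ← exp_sub, hexponent]

theorem sis_competition_conservation_general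
    (lam1 lam2 mu1 mu2 : ℝ)
    (x1 x2 : ℝ → ℝ)
    (hx1 : ∀ t : ℝ, HasDerivAt x1 (lam1 * x1 t * (1 - x1 t - x2 t) - mu1 * x1 t) t)
    (hx2 : ∀ t : ℝ, HasDerivAt x2 (lam2 * x2 t * (1 - x1 t - x2 t) - mu2 * x2 t) t)
    (h10 : 0 < x1 0) (h20 : 0 < x2 0) :
    ∀ t : ℝ, 0 ≤ t →
      x1 t ^ lam2 / x2 t ^ lam1
        = (x1 0 ^ lam2 / x2 0 ^ lam1) * Real.exp ((mu2 * lam1 - mu1 * lam2) * t) := by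
  intro t _
  have hc1 : Continuous x1 := continuous_iff_continuousAt.2 fun t => (hx1 t).continuousAt
  have hc2 : Continuous x2 := continuous_iff_continuousAt.2 fun t => (hx2 t).continuousAt
  exact rpow_div_rpow_eq_mul_exp_of_hasDerivAt_mul
    (f := fun t => lam1 * (1 - x1 t - x2 t) - mu1) (g := fun t => lam2 * (1 - x1 t - x2 t) - mu2)
    (by fun_prop) (by fun_prop)
    (fun t => (hx1 t).congr_deriv (by ring)) (fun t => (hx2 t).congr_deriv (by ring))
    h10 h20 (fun t => by ring) t

/-- Conservation relation for the deterministic SIS logistic competition system: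
`x₁(t)^{λ₂} / x₂(t)^{λ₁} = (x₁(0)^{λ₂} / x₂(0)^{λ₁}) · exp((μ₂λ₁ - μ₁λ₂) t)` for `t ≥ 0`,
provided the initial data are strictly positive. -/
theorem sis_competition_conservation
    (lam1 lam2 mu1 mu2 : ℝ) (hlam1 : 0 < lam1) (hlam2 : 0 < lam2)
    (hmu1 : 0 < mu1) (hmu2 : 0 < mu2)
    (x1 x2 : ℝ → ℝ)
    (hx1 : ∀ t : ℝ, HasDerivAt x1 (lam1 * x1 t * (1 - x1 t - x2 t) - mu1 * x1 t) t)
    (hx2 : ∀ t : ℝ, HasDerivAt x2 (lam2 * x2 t * (1 - x1 t - x2 t) - mu2 * x2 t) t)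
    (h10 : 0 < x1 0) (h20 : 0 < x2 0) :
    ∀ t : ℝ, 0 ≤ t →
      x1 t ^ lam2 / x2 t ^ lam1
        = (x1 0 ^ lam2 / x2 0 ^ lam1) * Real.exp ((mu2 * lam1 - mu1 * lam2) * t) :=
  sis_competition_conservation_general lam1 lam2 mu1 mu2 x1 x2 hx1 hx2 h10 h20
end

section
/- If a solution of the deterministic SIS competition system travels from a point a = (a_1, a_2) with a_1, a_2 > 0 to a point b = (b_1, b_2) with b_1, b_2 > 0, then the time taken equals t_{a→b} = (λ_2/(μ_2 λ_1 - μ_1 λ_2)) log(b_1/a_1) - (λ_1/(μ_2 λ_1 - μ_1 λ_2)) log(b_2/a_2), provided μ_2 λ_1 ≠ μ_1 λ_2. -/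
/-!
Each equation is linear in its own unknown, `xᵢ' = rᵢ(t) xᵢ` with per-capita rate
`rᵢ = λᵢ (1 - x₁ - x₂) - μᵢ`, so `log (bᵢ / aᵢ) = ∫₀ᵀ rᵢ`. The two rates share the factor
`1 - x₁ - x₂`, which cancels in `λ₂ r₁ - λ₁ r₂ = μ₂ λ₁ - μ₁ λ₂`; integrating this constant
over `[0, T]` gives `λ₂ log (b₁ / a₁) - λ₁ log (b₂ / a₂) = (μ₂ λ₁ - μ₁ λ₂) T`.
-/

open Real intervalIntegral

theorem eq_mul_exp_integral_of_hasDerivAt {f x : ℝ → ℝ} (hf : Continuous f)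
    (hx : ∀ t, HasDerivAt x (f t * x t) t) (t₀ t : ℝ) :
    x t = x t₀ * exp (∫ s in t₀..t, f s) := by
  set F : ℝ → ℝ := fun t => ∫ s in t₀..t, f s
  have hF : ∀ t, HasDerivAt F (f t) t := fun t =>
    integral_hasDerivAt_right (hf.intervalIntegrable t₀ t)
      (hf.stronglyMeasurableAtFilter _ _) hf.continuousAt
  have hderiv : ∀ t, HasDerivAt (fun t => x t * exp (-F t)) 0 t := fun t =>
    ((hx t).mul (hF t).neg.exp).congr_deriv (by ring)
  have hconst : x t * exp (-F t) = x t₀ * exp (-F t₀) :=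
    is_const_of_deriv_eq_zero (fun s => (hderiv s).differentiableAt)
      (fun s => (hderiv s).deriv) t t₀
  have hF₀ : F t₀ = 0 := integral_same
  rw [hF₀, neg_zero, exp_zero, mul_one] at hconst
  rw [← hconst, mul_assoc, ← exp_add, neg_add_cancel, exp_zero, mul_one]

theorem log_div_eq_integral_of_hasDerivAt {f x : ℝ → ℝ} (hf : Continuous f)
    (hx : ∀ t, HasDerivAt x (f t * x t) t) {t₀ : ℝ} (hx₀ : x t₀ ≠ 0) (t : ℝ) :
    log (x t / x t₀) = ∫ s in t₀..t, f s := by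
  rw [eq_mul_exp_integral_of_hasDerivAt hf hx t₀ t, mul_div_cancel_left₀ _ hx₀, log_exp]

/-- Per-capita growth rate of a strain: the system reads `xᵢ' = sisRate λᵢ μᵢ x₁ x₂ t * xᵢ t`. -/
def sisRate (lam mu : ℝ) (x1 x2 : ℝ → ℝ) (t : ℝ) : ℝ :=
  lam * (1 - x1 t - x2 t) - mu

theorem continuous_sisRate (lam mu : ℝ) {x1 x2 : ℝ → ℝ} (hx1 : Continuous x1)
    (hx2 : Continuous x2) : Continuous (sisRate lam mu x1 x2) := by
  unfold sisRate
  fun_prop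

theorem log_div_eq_integral_sisRate {lam mu : ℝ} {x x1 x2 : ℝ → ℝ} (hx1 : Continuous x1)
    (hx2 : Continuous x2) (hx : ∀ t, HasDerivAt x (lam * x t * (1 - x1 t - x2 t) - mu * x t) t)
    {t₀ : ℝ} (hx₀ : x t₀ ≠ 0) (t : ℝ) :
    log (x t / x t₀) = ∫ s in t₀..t, sisRate lam mu x1 x2 s :=
  log_div_eq_integral_of_hasDerivAt (continuous_sisRate lam mu hx1 hx2)
    (fun t => (hx t).congr_deriv (by unfold sisRate; ring)) hx₀ t

theorem sisRate_combination (lam1 lam2 mu1 mu2 : ℝ) (x1 x2 : ℝ → ℝ) (t : ℝ) :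
    lam2 * sisRate lam1 mu1 x1 x2 t - lam1 * sisRate lam2 mu2 x1 x2 t
      = mu2 * lam1 - mu1 * lam2 := by
  unfold sisRate
  ring

theorem integral_sisRate_combination (lam1 lam2 mu1 mu2 : ℝ) {x1 x2 : ℝ → ℝ}
    (hx1 : Continuous x1) (hx2 : Continuous x2) (T : ℝ) :
    lam2 * (∫ s in (0 : ℝ)..T, sisRate lam1 mu1 x1 x2 s)
      - lam1 * (∫ s in (0 : ℝ)..T, sisRate lam2 mu2 x1 x2 s)
      = (mu2 * lam1 - mu1 * lam2) * T := by
  have hint : ∀ lam mu : ℝ, IntervalIntegrable (sisRate lam mu x1 x2) MeasureTheory.volume 0 T :=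
    fun lam mu => (continuous_sisRate lam mu hx1 hx2).intervalIntegrable 0 T
  rw [← integral_const_mul, ← integral_const_mul,
    ← integral_sub ((hint lam1 mu1).const_mul _) ((hint lam2 mu2).const_mul _)]
  simp only [sisRate_combination, integral_const, smul_eq_mul, sub_zero]
  ring

theorem sis_competition_travel_time_general
    (lam1 lam2 mu1 mu2 : ℝ) (hne : mu2 * lam1 ≠ mu1 * lam2)
    (x1 x2 : ℝ → ℝ)
    (hx1 : ∀ t : ℝ, HasDerivAt x1 (lam1 * x1 t * (1 - x1 t - x2 t) - mu1 * x1 t) t)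
    (hx2 : ∀ t : ℝ, HasDerivAt x2 (lam2 * x2 t * (1 - x1 t - x2 t) - mu2 * x2 t) t)
    (a1 a2 b1 b2 : ℝ) (ha1 : 0 < a1) (ha2 : 0 < a2)
    (T : ℝ)
    (hx10 : x1 0 = a1) (hx20 : x2 0 = a2) (hx1T : x1 T = b1) (hx2T : x2 T = b2) :
    T = (lam2 / (mu2 * lam1 - mu1 * lam2)) * Real.log (b1 / a1)
        - (lam1 / (mu2 * lam1 - mu1 * lam2)) * Real.log (b2 / a2) := by
  have hcx1 : Continuous x1 := continuous_iff_continuousAt.2 fun t => (hx1 t).continuousAt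
  have hcx2 : Continuous x2 := continuous_iff_continuousAt.2 fun t => (hx2 t).continuousAt
  have hlog1 := log_div_eq_integral_sisRate hcx1 hcx2 hx1 (hx10 ▸ ha1.ne') T
  have hlog2 := log_div_eq_integral_sisRate hcx1 hcx2 hx2 (hx20 ▸ ha2.ne') T
  rw [hx10, hx1T] at hlog1
  rw [hx20, hx2T] at hlog2
  have hc : mu2 * lam1 - mu1 * lam2 ≠ 0 := sub_ne_zero.2 hne
  rw [hlog1, hlog2, div_mul_eq_mul_div, div_mul_eq_mul_div, ← sub_div,
    integral_sisRate_combination lam1 lam2 mu1 mu2 hcx1 hcx2, mul_div_cancel_left₀ _ hc]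

/-- Travel time between two points of a trajectory of the deterministic SIS competition
system: if the solution goes from `a = (a₁,a₂)` (at time `0`) to `b = (b₁,b₂)` (at time `T ≥ 0`),
with all coordinates positive, then
`T = (λ₂/(μ₂λ₁ - μ₁λ₂)) log(b₁/a₁) - (λ₁/(μ₂λ₁ - μ₁λ₂)) log(b₂/a₂)`. -/
theorem sis_competition_travel_time
    (lam1 lam2 mu1 mu2 : ℝ) (hlam1 : 0 < lam1) (hlam2 : 0 < lam2)
    (hmu1 : 0 < mu1) (hmu2 : 0 < mu2) (hne : mu2 * lam1 ≠ mu1 * lam2)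
    (x1 x2 : ℝ → ℝ)
    (hx1 : ∀ t : ℝ, HasDerivAt x1 (lam1 * x1 t * (1 - x1 t - x2 t) - mu1 * x1 t) t)
    (hx2 : ∀ t : ℝ, HasDerivAt x2 (lam2 * x2 t * (1 - x1 t - x2 t) - mu2 * x2 t) t)
    (a1 a2 b1 b2 : ℝ) (ha1 : 0 < a1) (ha2 : 0 < a2) (hb1 : 0 < b1) (hb2 : 0 < b2)
    (T : ℝ) (hT : 0 ≤ T)
    (hx10 : x1 0 = a1) (hx20 : x2 0 = a2) (hx1T : x1 T = b1) (hx2T : x2 T = b2) :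
    T = (lam2 / (mu2 * lam1 - mu1 * lam2)) * Real.log (b1 / a1)
        - (lam1 / (mu2 * lam1 - mu1 * lam2)) * Real.log (b2 / a2) :=
  sis_competition_travel_time_general lam1 lam2 mu1 mu2 hne x1 x2 hx1 hx2 a1 a2 b1 b2 ha1 ha2 T hx10
    hx20 hx1T hx2T
end

section
/- The function φ(x_1, x_2) = (1/2)(x_1 + x_2 - 1 + μ_1/λ_1)^2 + x_2 (μ_2/λ_2 - μ_1/λ_1) is nonnegative on the region {x_1 ≥ 0, x_2 ≥ 0}, vanishes only at the point (1 - μ_1/λ_1, 0), and along any solution of the deterministic SIS competition system with x_1, x_2 ≥ 0 its time derivative equals -λ_1 x_1 (x_1 + x_2 - 1 + μ_1/λ_1)^2 - λ_2 x_2 (x_1 + x_2 - 1 + μ_2/λ_2)^2 ≤ 0. -/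
/-- The Lyapunov function for the deterministic SIS competition system. -/
noncomputable def sisLyapunov (lam1 lam2 mu1 mu2 a b : ℝ) : ℝ :=
  (1 / 2) * (a + b - 1 + mu1 / lam1) ^ 2 + b * (mu2 / lam2 - mu1 / lam1)

/-! Writing `s₁ = x₁ + x₂ - 1 + μ₁/λ₁` and `c = μ₂/λ₂ - μ₁/λ₁ > 0`, we have `φ = s₁²/2 + c x₂`,
a sum of two nonnegative terms on the quadrant, which vanish exactly when `s₁ = 0` and `x₂ = 0`.
Each vector field component factors as `ẋᵢ = -λᵢ xᵢ sᵢ` with `sᵢ = x₁ + x₂ - 1 + μᵢ/λᵢ`, and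
`s₁ + c = s₂`, so `φ̇ = s₁ (ẋ₁ + ẋ₂) + c ẋ₂ = s₁ ẋ₁ + s₂ ẋ₂ = -λ₁ x₁ s₁² - λ₂ x₂ s₂²`. -/

lemma div_lt_div_of_div_lt_div_swap {l₁ l₂ m₁ m₂ : ℝ} (h₂ : 0 < l₂ / m₂) (h : l₂ / m₂ < l₁ / m₁) :
    m₁ / l₁ < m₂ / l₂ := by
  rw [← inv_div l₁ m₁, ← inv_div l₂ m₂]
  exact inv_strictAnti₀ h₂ h

section SIS

variable {lam1 lam2 mu1 mu2 : ℝ}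

lemma sisLyapunov_nonneg (hc : mu1 / lam1 ≤ mu2 / lam2) {b : ℝ} (hb : 0 ≤ b) (a : ℝ) :
    0 ≤ sisLyapunov lam1 lam2 mu1 mu2 a b := by
  unfold sisLyapunov
  have := mul_nonneg hb (sub_nonneg.2 hc)
  positivity

lemma sisLyapunov_eq_zero_iff (hc : mu1 / lam1 < mu2 / lam2) {b : ℝ} (hb : 0 ≤ b) (a : ℝ) :
    sisLyapunov lam1 lam2 mu1 mu2 a b = 0 ↔ a = 1 - mu1 / lam1 ∧ b = 0 := by
  have hc' : 0 < mu2 / lam2 - mu1 / lam1 := sub_pos.2 hc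
  unfold sisLyapunov
  rw [add_eq_zero_iff_of_nonneg (by positivity) (mul_nonneg hb hc'.le),
    mul_eq_zero_iff_right hc'.ne', mul_eq_zero_iff_left one_half_pos.ne', sq_eq_zero_iff]
  exact and_congr_left fun hb0 => by subst hb0; constructor <;> intro <;> linarith

end SIS

lemma sis_rate_eq {lam mu : ℝ} (hlam : lam ≠ 0) (x y z : ℝ) :
    lam * x * (1 - y - z) - mu * x = -(lam * x * (y + z - 1 + mu / lam)) := by
  field_simp
  ring

lemma HasDerivAt.sisLyapunov (lam1 lam2 mu1 mu2 : ℝ) {x1 x2 : ℝ → ℝ} {d1 d2 t : ℝ}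
    (h1 : HasDerivAt x1 d1 t) (h2 : HasDerivAt x2 d2 t) :
    HasDerivAt (fun s => sisLyapunov lam1 lam2 mu1 mu2 (x1 s) (x2 s))
      ((x1 t + x2 t - 1 + mu1 / lam1) * (d1 + d2) + d2 * (mu2 / lam2 - mu1 / lam1)) t := by
  have := ((((h1.fun_add h2).sub_const 1).add_const (mu1 / lam1)).fun_pow 2).const_mul (1 / 2)
    |>.fun_add (h2.mul_const (mu2 / lam2 - mu1 / lam1))
  exact this.congr_deriv (by ring)

/-- `φ(x₁,x₂) = ½(x₁+x₂-1+μ₁/λ₁)² + x₂(μ₂/λ₂ - μ₁/λ₁)` is nonnegative on the first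
quadrant, vanishes only at `(1-μ₁/λ₁, 0)`, and along solutions of the SIS competition
system its derivative is `-λ₁x₁(x₁+x₂-1+μ₁/λ₁)² - λ₂x₂(x₁+x₂-1+μ₂/λ₂)² ≤ 0`. -/
theorem sis_lyapunov_properties
    (lam1 lam2 mu1 mu2 : ℝ) (hlam2 : 0 < lam2) (hmu2 : 0 < mu2)
    (hmu1 : 0 < mu1) (hlt : mu1 < lam1)
    (hratio : lam2 / mu2 < lam1 / mu1)
    (x1 x2 : ℝ → ℝ)
    (hx1 : ∀ t : ℝ, HasDerivAt x1 (lam1 * x1 t * (1 - x1 t - x2 t) - mu1 * x1 t) t)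
    (hx2 : ∀ t : ℝ, HasDerivAt x2 (lam2 * x2 t * (1 - x1 t - x2 t) - mu2 * x2 t) t) :
    (∀ a b : ℝ, 0 ≤ a → 0 ≤ b → 0 ≤ sisLyapunov lam1 lam2 mu1 mu2 a b) ∧
    (∀ a b : ℝ, 0 ≤ a → 0 ≤ b →
      (sisLyapunov lam1 lam2 mu1 mu2 a b = 0 ↔ a = 1 - mu1 / lam1 ∧ b = 0)) ∧
    (∀ t : ℝ,
      HasDerivAt (fun s => sisLyapunov lam1 lam2 mu1 mu2 (x1 s) (x2 s))
        (-(lam1 * x1 t * (x1 t + x2 t - 1 + mu1 / lam1) ^ 2)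
          - lam2 * x2 t * (x1 t + x2 t - 1 + mu2 / lam2) ^ 2) t ∧
      (0 ≤ x1 t → 0 ≤ x2 t →
        -(lam1 * x1 t * (x1 t + x2 t - 1 + mu1 / lam1) ^ 2)
          - lam2 * x2 t * (x1 t + x2 t - 1 + mu2 / lam2) ^ 2 ≤ 0)) := by
  have hlam1 : 0 < lam1 := hmu1.trans hlt
  have hc : mu1 / lam1 < mu2 / lam2 := div_lt_div_of_div_lt_div_swap (by positivity) hratio
  refine ⟨fun a b _ hb => sisLyapunov_nonneg hc.le hb a,
    fun a b _ hb => sisLyapunov_eq_zero_iff hc hb a, fun t => ⟨?_, fun h1 h2 => ?_⟩⟩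
  · have := (hx1 t).sisLyapunov lam1 lam2 mu1 mu2 (hx2 t)
    rw [sis_rate_eq hlam1.ne', sis_rate_eq hlam2.ne'] at this
    convert this using 1
    ring
  · have := mul_nonneg (mul_nonneg hlam1.le h1) (sq_nonneg (x1 t + x2 t - 1 + mu1 / lam1))
    have := mul_nonneg (mul_nonneg hlam2.le h2) (sq_nonneg (x1 t + x2 t - 1 + mu2 / lam2))
    linarith
end

section
/- Let η_1 = λ_1 - μ_1 > 0, η_2 = μ_2 - λ_2 μ_1/λ_1 > 0, with η_1 ≠ η_2, a = 1 - η_2/η_1, L = min{η_1, η_2}, and L_1 = (λ_1 + |λ_1 - λ_2|)(η_1 + η_2)/η_1. If the transformed coordinates (x̃_1(t), x̃_2(t)) of a solution of the SIS competition system satisfy y(0) := max{|x̃_1(0)|, x̃_2(0)/|a|} ≤ L/(2 L_1), then for all t ≥ 0 one has |x̃_1(t)| ≤ 2 y(0) e^{-t L} and x̃_2(t) ≤ 2 |a| y(0) e^{-t L}. -/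
/-!
Put `F = max (|x̃₁|, x̃₂ / |a|)`. In each coordinate the linear part of the vector field decays
at rate `η₁` resp. `η₂ ≥ L`, and the quadratic remainder is at most `L₁ F²`; hence the upper right
Dini derivative of `F` satisfies `D⁺F ≤ -L F + L₁ F²`. Comparing `F` with the explicit solution
`B(t) = y e^{-Lt} / (1 - k + k e^{-Lt})`, `k = y L₁ / L`, of the Bernoulli equation
`B' = -L B + L₁ B²`, and using `k ≤ 1/2`, gives `F(t) ≤ y e^{-Lt} / (1 - k) ≤ 2 y e^{-Lt}`.
-/

open Filter Set Topology Real

/-- `limsup_{z → x⁺} slope f x z ≤ c`, phrased without `limsup` to avoid its junk values. -/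
def UpperDiniLE (f : ℝ → ℝ) (x c : ℝ) : Prop :=
  ∀ r, c < r → ∀ᶠ z in 𝓝[>] x, slope f x z < r

namespace UpperDiniLE

variable {f g h : ℝ → ℝ} {x c c' : ℝ}

theorem mono (hf : UpperDiniLE f x c) (hc : c ≤ c') : UpperDiniLE f x c' :=
  fun r hr => hf r (hc.trans_lt hr)

theorem of_tendsto {G : ℝ} (hf : Tendsto (slope f x) (𝓝[>] x) (𝓝 G)) (hG : G ≤ c) :
    UpperDiniLE f x c :=
  fun _ hr => hf.eventually_lt_const (hG.trans_lt hr)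

theorem of_hasDerivAt {d : ℝ} (hf : HasDerivAt f d x) (hd : d ≤ c) : UpperDiniLE f x c :=
  of_tendsto ((hasDerivWithinAt_iff_tendsto_slope' (lt_irrefl x)).1 hf.hasDerivWithinAt) hd

theorem max (hg : ContinuousAt g x) (hh : ContinuousAt h x)
    (hgc : h x ≤ g x → UpperDiniLE g x c) (hhc : g x ≤ h x → UpperDiniLE h x c) :
    UpperDiniLE (fun s => max (g s) (h s)) x c := by
  intro r hr
  rcases lt_trichotomy (g x) (h x) with hlt | heq | hgt
  · filter_upwards [nhdsWithin_le_nhds (hg.eventually_lt hh hlt), hhc hlt.le r hr]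
      with z hz hslope
    rwa [slope_def_field, max_eq_right hz.le, max_eq_right hlt.le, ← slope_def_field]
  · filter_upwards [hgc heq.ge r hr, hhc heq.le r hr, self_mem_nhdsWithin] with z hgz hhz hz
    have hzx : 0 < z - x := sub_pos.2 hz
    rw [slope_def_field, div_lt_iff₀ hzx] at hgz hhz ⊢
    rw [← heq] at hhz ⊢
    rw [max_self, ← max_sub_sub_right]
    exact max_lt hgz hhz
  · filter_upwards [nhdsWithin_le_nhds (hh.eventually_lt hg hgt), hgc hgt.le r hr]
      with z hz hslope
    rwa [slope_def_field, max_eq_left hz.le, max_eq_left hgt.le, ← slope_def_field]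

end UpperDiniLE

theorem HasDerivAt.upperDiniLE_abs {u : ℝ → ℝ} {x d η K : ℝ} (hu : HasDerivAt u d x)
    (hK : |d + η * u x| ≤ K) : UpperDiniLE (fun s => |u s|) x (-η * |u x| + K) := by
  rcases lt_trichotomy (u x) 0 with hneg | hzero | hpos
  · refine UpperDiniLE.of_hasDerivAt ((hasDerivAt_abs_neg hneg).comp x hu) ?_
    rw [abs_of_neg hneg]
    linarith [neg_abs_le (d + η * u x)]
  · have hslope : Tendsto (slope u x) (𝓝[>] x) (𝓝 d) :=
      (hasDerivWithinAt_iff_tendsto_slope' (lt_irrefl x)).1 hu.hasDerivWithinAt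
    refine UpperDiniLE.of_tendsto (hslope.abs.congr' ?_) (by simpa [hzero] using hK)
    filter_upwards [self_mem_nhdsWithin] with z hz
    simp [slope_def_field, hzero, abs_div, abs_of_pos (sub_pos.2 (mem_Ioi.1 hz))]
  · refine UpperDiniLE.of_hasDerivAt ((hasDerivAt_abs_pos hpos).comp x hu) ?_
    rw [abs_of_pos hpos]
    linarith [le_abs_self (d + η * u x)]

theorem upperDiniLE_max_abs {u v : ℝ → ℝ} {x du dv η₁ η₂ L K : ℝ} (hu : HasDerivAt u du x)
    (hv : HasDerivAt v dv x) (hLu : L ≤ η₁) (hLv : L ≤ η₂) (hKu : |du + η₁ * u x| ≤ K)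
    (hKv : |dv + η₂ * v x| ≤ K) :
    UpperDiniLE (fun s => max |u s| |v s|) x (-L * max |u x| |v x| + K) := by
  refine UpperDiniLE.max hu.continuousAt.abs hv.continuousAt.abs (fun h => ?_) (fun h => ?_)
  · refine (hu.upperDiniLE_abs hKu).mono ?_
    rw [max_eq_left h]
    nlinarith [abs_nonneg (u x)]
  · refine (hv.upperDiniLE_abs hKv).mono ?_
    rw [max_eq_right h]
    nlinarith [abs_nonneg (v x)]

noncomputable def riccatiDecay (L M y t : ℝ) : ℝ :=
  y * exp (-t * L) / (1 - y * M / L * (1 - exp (-t * L)))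

section Riccati

variable {L M y : ℝ}

theorem one_sub_mul_one_sub_exp_pos {k : ℝ} (hk0 : 0 ≤ k) (hk1 : k < 1) (s : ℝ) :
    0 < 1 - k * (1 - exp s) := by
  nlinarith [exp_pos s]

theorem hasDerivAt_riccatiDecay (hL : L ≠ 0) (hk0 : 0 ≤ y * M / L) (hk1 : y * M / L < 1)
    (t : ℝ) : HasDerivAt (riccatiDecay L M y)
      (-L * riccatiDecay L M y t + M * riccatiDecay L M y t ^ 2) t := by
  have hden := (one_sub_mul_one_sub_exp_pos hk0 hk1 (-t * L)).ne'
  have hexp : HasDerivAt (fun s => exp (-s * L)) (exp (-t * L) * (-1 * L)) t :=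
    ((hasDerivAt_id t).neg.mul_const L).exp
  refine ((hexp.const_mul y).div ((hexp.const_sub 1).const_mul (y * M / L) |>.const_sub 1)
    hden).congr_deriv ?_
  unfold riccatiDecay
  field_simp
  ring

theorem riccatiDecay_zero : riccatiDecay L M y 0 = y := by
  simp [riccatiDecay]

theorem riccatiDecay_pos (hy : 0 < y) (hk0 : 0 ≤ y * M / L) (hk1 : y * M / L < 1) (t : ℝ) :
    0 < riccatiDecay L M y t :=
  div_pos (by positivity) (one_sub_mul_one_sub_exp_pos hk0 hk1 _)

theorem riccatiDecay_le (hy : 0 ≤ y) (hk0 : 0 ≤ y * M / L) (hk1 : y * M / L < 1) (t : ℝ) :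
    riccatiDecay L M y t ≤ y * exp (-t * L) / (1 - y * M / L) := by
  unfold riccatiDecay
  gcongr
  nlinarith [mul_nonneg hk0 (exp_pos (-t * L)).le]

end Riccati

theorem le_riccatiDecay_of_upperDiniLE {f : ℝ → ℝ} {L M M' y t : ℝ} (hL : L ≠ 0) (hy : 0 < y)
    (hk0 : 0 ≤ y * M / L) (hk1 : y * M / L < 1) (hM : M' < M) (ht : 0 ≤ t)
    (hf : ContinuousOn f (Icc 0 t)) (hf0 : f 0 ≤ y)
    (hdini : ∀ x ∈ Ico 0 t, UpperDiniLE f x (-L * f x + M' * f x ^ 2)) :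
    f t ≤ riccatiDecay L M y t := by
  refine image_le_of_liminf_slope_right_lt_deriv_boundary hf
    (fun x hx r hr => (hdini x hx r hr).frequently) (by rwa [riccatiDecay_zero])
    (hasDerivAt_riccatiDecay hL hk0 hk1) (fun x _ hfx => ?_) ⟨ht, le_rfl⟩
  rw [hfx]
  have hB := riccatiDecay_pos hy hk0 hk1 x
  gcongr

theorem le_two_mul_exp_of_upperDiniLE {f : ℝ → ℝ} {L M y t : ℝ} (hL : 0 < L) (hM : 0 ≤ M)
    (hy : 0 ≤ y) (hyM : 2 * y * M ≤ L) (ht : 0 ≤ t) (hf : ContinuousOn f (Icc 0 t))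
    (hf0 : f 0 ≤ y) (hdini : ∀ x ∈ Ico 0 t, UpperDiniLE f x (-L * f x + M * f x ^ 2)) :
    f t ≤ 2 * y * exp (-t * L) := by
  have hk : y * M / L ≤ 1 / 2 := by
    rw [div_le_iff₀ hL]
    linarith
  set g : ℝ → ℝ := fun ε => (y + ε) * exp (-t * L) / (1 - (y + ε) * (M + ε) / L)
  have hg : ContinuousAt g 0 := by
    refine ContinuousAt.div (by fun_prop) (by fun_prop) ?_
    simp only [add_zero]
    linarith
  have hsmall : ∀ᶠ ε in 𝓝 0, (y + ε) * (M + ε) / L < 1 := by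
    refine ContinuousAt.eventually_lt (by fun_prop) continuousAt_const ?_
    simp only [add_zero]
    linarith
  -- The comparison principle needs strict inequalities, so compare with `y + ε`, `M + ε`.
  have hev : ∀ᶠ ε in 𝓝[>] 0, f t ≤ g ε := by
    filter_upwards [nhdsWithin_le_nhds hsmall, self_mem_nhdsWithin] with ε hk1 (hε : 0 < ε)
    have hk0 : 0 ≤ (y + ε) * (M + ε) / L := by positivity
    exact (le_riccatiDecay_of_upperDiniLE hL.ne' (by positivity) hk0 hk1
      (lt_add_of_pos_right M hε) ht hf (hf0.trans (by linarith)) hdini).trans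
      (riccatiDecay_le (by positivity) hk0 hk1 t)
  calc f t ≤ g 0 := ge_of_tendsto (hg.tendsto.mono_left nhdsWithin_le_nhds) hev
    _ = y * exp (-t * L) / (1 - y * M / L) := by simp only [g, add_zero]
    _ ≤ 2 * y * exp (-t * L) := by
      rw [div_le_iff₀ (by linarith)]
      nlinarith [mul_nonneg hy (exp_pos (-t * L)).le]

theorem abs_quadratic_form_le {p q m : ℝ} (α β γ : ℝ) (hp : |p| ≤ m) (hq : |q| ≤ m) :
    |α * p ^ 2 + β * q ^ 2 + γ * (p * q)| ≤ (|α| + |β| + |γ|) * m ^ 2 := by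
  have hm : 0 ≤ m := (abs_nonneg p).trans hp
  calc _ ≤ |α| * |p| ^ 2 + |β| * |q| ^ 2 + |γ| * (|p| * |q|) := by
        have h := abs_add_three (α * p ^ 2) (β * q ^ 2) (γ * (p * q))
        rwa [abs_mul, abs_mul, abs_mul, abs_mul, abs_pow, abs_pow] at h
    _ ≤ |α| * m ^ 2 + |β| * m ^ 2 + |γ| * (m * m) := by gcongr
    _ = _ := by ring

theorem sis_eta₂_pos {lam1 lam2 mu1 mu2 : ℝ} (hmu2 : 0 < mu2) (hmu1 : 0 < mu1) (hlam1 : 0 < lam1)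
    (hratio : lam2 / mu2 < lam1 / mu1) : 0 < mu2 - lam2 * mu1 / lam1 := by
  rw [div_lt_div_iff₀ hmu2 hmu1] at hratio
  rw [sub_pos, div_lt_iff₀ hlam1]
  linarith

section SIS

variable {lam1 lam2 eta1 eta2 : ℝ}

theorem sis_drift₁_bound (hlam1 : 0 ≤ lam1) (he1 : 0 < eta1) (he2 : 0 ≤ eta2) {p q m : ℝ}
    (hp : |p| ≤ m) (hq : |q| ≤ m) :
    |(-eta1 * p - lam1 * p ^ 2 - (eta2 * (lam1 - lam2) / eta1) * q ^ 2
        + (lam1 - lam2 + lam1 * eta2 / eta1) * p * q) + eta1 * p|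
      ≤ (lam1 + |lam1 - lam2|) * (eta1 + eta2) / eta1 * m ^ 2 := by
  have hform : (-eta1 * p - lam1 * p ^ 2 - (eta2 * (lam1 - lam2) / eta1) * q ^ 2
        + (lam1 - lam2 + lam1 * eta2 / eta1) * p * q) + eta1 * p
      = -lam1 * p ^ 2 + -(eta2 * (lam1 - lam2) / eta1) * q ^ 2
        + (lam1 - lam2 + lam1 * eta2 / eta1) * (p * q) := by ring
  rw [hform]
  refine (abs_quadratic_form_le _ _ _ hp hq).trans (mul_le_mul_of_nonneg_right ?_ (sq_nonneg m))
  have hcross := abs_add_le (lam1 - lam2) (lam1 * eta2 / eta1)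
  rw [abs_of_nonneg (by positivity : 0 ≤ lam1 * eta2 / eta1)] at hcross
  have hL1 : (lam1 + |lam1 - lam2|) * (eta1 + eta2) / eta1
      = lam1 + eta2 * |lam1 - lam2| / eta1 + (|lam1 - lam2| + lam1 * eta2 / eta1) := by
    field_simp
    ring
  rw [abs_neg, abs_neg, abs_of_nonneg hlam1, abs_div, abs_mul, abs_of_nonneg he2,
    abs_of_pos he1, hL1]
  linarith

theorem sis_drift₂_bound (hlam1 : 0 ≤ lam1) (he1 : 0 < eta1) (he2 : 0 ≤ eta2) {a p x m : ℝ}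
    (ha : a ≠ 0) (hp : |p| ≤ m) (hq : |(x / |a|)| ≤ m) :
    |(-eta2 * x - lam2 * x * p + (lam2 / a) * (eta2 / eta1) * x ^ 2) / |a| + eta2 * (x / |a|)|
      ≤ (lam1 + |lam1 - lam2|) * (eta1 + eta2) / eta1 * m ^ 2 := by
  have ha' : |a| ≠ 0 := abs_ne_zero.2 ha
  have hform : (-eta2 * x - lam2 * x * p + (lam2 / a) * (eta2 / eta1) * x ^ 2) / |a|
        + eta2 * (x / |a|)
      = 0 * p ^ 2 + lam2 * eta2 / eta1 * (|a| / a) * (x / |a|) ^ 2 + -lam2 * (p * (x / |a|)) := by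
    field_simp
    ring
  rw [hform]
  refine (abs_quadratic_form_le _ _ _ hp hq).trans (mul_le_mul_of_nonneg_right ?_ (sq_nonneg m))
  have hlam2 : |lam2| ≤ lam1 + |lam1 - lam2| := by
    have := abs_sub_abs_le_abs_sub lam2 lam1
    rw [abs_sub_comm, abs_of_nonneg hlam1] at this
    linarith
  rw [abs_zero, abs_neg, abs_mul, abs_div, abs_div, abs_mul, abs_abs, div_self ha', mul_one,
    abs_of_nonneg he2, abs_of_pos he1]
  calc 0 + |lam2| * eta2 / eta1 + |lam2| = |lam2| * (eta1 + eta2) / eta1 := by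
        field_simp
        ring
    _ ≤ (lam1 + |lam1 - lam2|) * (eta1 + eta2) / eta1 := by gcongr

end SIS

theorem sis_transformed_exponential_decay_general
    (lam1 lam2 mu1 mu2 eta1 eta2 a L L1 : ℝ)
    (hmu2 : 0 < mu2) (hmu1 : 0 < mu1) (hlt : mu1 < lam1)
    (hratio : lam2 / mu2 < lam1 / mu1)
    (heta1 : eta1 = lam1 - mu1) (heta2 : eta2 = mu2 - lam2 * mu1 / lam1)
    (hne : eta1 ≠ eta2)
    (ha : a = 1 - eta2 / eta1)
    (hL : L = min eta1 eta2)
    (hL1 : L1 = (lam1 + |lam1 - lam2|) * (eta1 + eta2) / eta1)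
    (tx1 tx2 : ℝ → ℝ) (htx2nn : ∀ t : ℝ, 0 ≤ tx2 t)
    (hode1 : ∀ t : ℝ, HasDerivAt tx1
      (-eta1 * tx1 t - lam1 * (tx1 t) ^ 2
        - (eta2 * (lam1 - lam2) / eta1) * (tx2 t / a) ^ 2
        + (lam1 - lam2 + lam1 * eta2 / eta1) * tx1 t * (tx2 t / a)) t)
    (hode2 : ∀ t : ℝ, HasDerivAt tx2
      (-eta2 * tx2 t - lam2 * tx2 t * tx1 t + (lam2 / a) * (eta2 / eta1) * (tx2 t) ^ 2) t)
    (hy0 : max |tx1 0| (tx2 0 / |a|) ≤ L / (2 * L1)) :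
    ∀ t : ℝ, 0 ≤ t →
      |tx1 t| ≤ 2 * max |tx1 0| (tx2 0 / |a|) * Real.exp (-t * L) ∧
      tx2 t ≤ 2 * |a| * max |tx1 0| (tx2 0 / |a|) * Real.exp (-t * L) := by
  intro t ht
  have hlam1 : 0 < lam1 := hmu1.trans hlt
  have he1 : 0 < eta1 := by linarith
  have he2 : 0 < eta2 := heta2 ▸ sis_eta₂_pos hmu2 hmu1 hlam1 hratio
  have ha0 : a ≠ 0 := by
    rw [ha, sub_ne_zero]
    exact (div_ne_one_of_ne hne.symm).symm
  have hLpos : 0 < L := hL ▸ lt_min he1 he2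
  have hL1pos : 0 < L1 := hL1 ▸ by positivity
  set F : ℝ → ℝ := fun s => max |tx1 s| |(tx2 s / |a|)|
  have hF0 : F 0 = max |tx1 0| (tx2 0 / |a|) := by
    simp only [F, abs_of_nonneg (div_nonneg (htx2nn 0) (abs_nonneg a))]
  have hFcont : Continuous F :=
    (continuous_iff_continuousAt.2 fun s => (hode1 s).continuousAt).abs.max
      ((continuous_iff_continuousAt.2 fun s => (hode2 s).continuousAt).div_const _).abs
  have hscale : ∀ s, |tx2 s / a| = |(tx2 s / |a|)| := fun s => by
    rw [abs_div, abs_div, abs_abs]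
  have hdini : ∀ x, UpperDiniLE F x (-L * F x + L1 * F x ^ 2) := fun x =>
    upperDiniLE_max_abs (hode1 x) ((hode2 x).div_const |a|) (hL ▸ min_le_left _ _)
      (hL ▸ min_le_right _ _)
      (hL1 ▸ sis_drift₁_bound hlam1.le he1 he2.le (le_max_left _ _)
        ((hscale x).trans_le (le_max_right _ _)))
      (hL1 ▸ sis_drift₂_bound hlam1.le he1 he2.le ha0 (le_max_left _ _) (le_max_right _ _))
  have hFt : F t ≤ 2 * F 0 * Real.exp (-t * L) :=
    le_two_mul_exp_of_upperDiniLE hLpos hL1pos.le ((abs_nonneg _).trans (le_max_left _ _))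
      (by rw [hF0]; rw [le_div_iff₀ (by positivity)] at hy0; linarith) ht hFcont.continuousOn
      le_rfl fun x _ => hdini x
  rw [hF0] at hFt
  refine ⟨(le_max_left _ _).trans hFt, ?_⟩
  calc tx2 t = |a| * (tx2 t / |a|) := by field_simp
    _ ≤ |a| * F t := by gcongr; exact (le_abs_self _).trans (le_max_right _ _)
    _ ≤ |a| * (2 * max |tx1 0| (tx2 0 / |a|) * Real.exp (-t * L)) := by gcongr
    _ = _ := by ring

/-- Exponential decay to the fixed point in the transformed coordinates, case of
distinct eigenvalues: if `y(0) = max{|x̃₁(0)|, x̃₂(0)/|a|} ≤ L/(2L₁)` then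
`|x̃₁(t)| ≤ 2y(0)e^{-tL}` and `x̃₂(t) ≤ 2|a|y(0)e^{-tL}` for all `t ≥ 0`. -/
theorem sis_transformed_exponential_decay
    (lam1 lam2 mu1 mu2 eta1 eta2 a L L1 : ℝ)
    (hlam2 : 0 < lam2) (hmu2 : 0 < mu2) (hmu1 : 0 < mu1) (hlt : mu1 < lam1)
    (hratio : lam2 / mu2 < lam1 / mu1)
    (heta1 : eta1 = lam1 - mu1) (heta2 : eta2 = mu2 - lam2 * mu1 / lam1)
    (hne : eta1 ≠ eta2)
    (ha : a = 1 - eta2 / eta1)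
    (hL : L = min eta1 eta2)
    (hL1 : L1 = (lam1 + |lam1 - lam2|) * (eta1 + eta2) / eta1)
    (tx1 tx2 : ℝ → ℝ) (htx2nn : ∀ t : ℝ, 0 ≤ tx2 t)
    (hode1 : ∀ t : ℝ, HasDerivAt tx1
      (-eta1 * tx1 t - lam1 * (tx1 t) ^ 2
        - (eta2 * (lam1 - lam2) / eta1) * (tx2 t / a) ^ 2
        + (lam1 - lam2 + lam1 * eta2 / eta1) * tx1 t * (tx2 t / a)) t)
    (hode2 : ∀ t : ℝ, HasDerivAt tx2
      (-eta2 * tx2 t - lam2 * tx2 t * tx1 t + (lam2 / a) * (eta2 / eta1) * (tx2 t) ^ 2) t)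
    (hy0 : max |tx1 0| (tx2 0 / |a|) ≤ L / (2 * L1)) :
    ∀ t : ℝ, 0 ≤ t →
      |tx1 t| ≤ 2 * max |tx1 0| (tx2 0 / |a|) * Real.exp (-t * L) ∧
      tx2 t ≤ 2 * |a| * max |tx1 0| (tx2 0 / |a|) * Real.exp (-t * L) :=
  sis_transformed_exponential_decay_general lam1 lam2 mu1 mu2 eta1 eta2 a L L1 hmu2 hmu1 hlt hratio
    heta1 heta2 hne ha hL hL1 tx1 tx2 htx2nn hode1 hode2 hy0
end

section
/- Under the same setup with η_1 ≠ η_2, if y(0) = max{|x̃_1(0)|, x̃_2(0)/|a|} ≤ L/(8 L_1), then for all t ≥ 0 the second component satisfies two-sided exponential bounds: (1/2) x_2(0) e^{-t η_2} ≤ x_2(t) ≤ 2 x_2(0) e^{-t η_2}. -/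
/-!
Put `f = x̃₁` and `p = x̃₂ / a`. Then `f' = -η₁ f + q` and `p' = p g`, where `|q| ≤ L₁ Y²` and
`|g + η₂| ≤ L₁ Y` for `Y = max |f| |p|`. A bootstrap shows `Y t ≤ 2 Y(0) e^{-L t / 2}`: if this
holds before time `x`, Duhamel's formula gives `|f x| ≤ Y(0) e^{-L x / 2}`, and writing
`p x = p 0 e^{-η₂ x + h(x)}` with `h(x) = ∫₀ˣ (g + η₂)` one gets
`|h(x)| ≤ 2 L₁ Y(0) · 2 / L ≤ 1/2`, hence `|p x| ≤ e^{1/2} Y(0) e^{-L x / 2}`; since `e^{1/2} < 2`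
the bound improves strictly. The factor `e^{h(t)}` then lies in `[1/2, 2]` for all `t ≥ 0`.
-/

open Set Real

theorem forall_lt_of_forall_Ico_le {α β : Type*} [ConditionallyCompleteLinearOrder α]
    [TopologicalSpace α] [OrderTopology α] [LinearOrder β] [TopologicalSpace β]
    [OrderClosedTopology β] {Y B : α → β} {a : α} (hY : Continuous Y) (hB : Continuous B)
    (hstep : ∀ x, a ≤ x → (∀ s ∈ Ico a x, Y s ≤ B s) → Y x < B x) :
    ∀ x, a ≤ x → Y x < B x := by
  intro x hx
  by_contra! hBY
  obtain ⟨τ, ⟨hτx, hτ⟩, hleast⟩ :=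
    (isCompact_Icc.inter_right (isClosed_le hB hY)).exists_isLeast ⟨x, ⟨hx, le_rfl⟩, hBY⟩
  refine (hstep τ hτx.1 fun s hs => ?_).not_ge hτ
  by_contra! hs'
  exact (hleast ⟨⟨hs.1, hs.2.le.trans hτx.2⟩, hs'.le⟩).not_gt hs.2

theorem eq_mul_exp_sub_of_hasDerivAt_mul {p g G : ℝ → ℝ} (hp : ∀ t, HasDerivAt p (p t * g t) t)
    (hG : ∀ t, HasDerivAt G (g t) t) (t s : ℝ) : p t = p s * exp (G t - G s) := by
  have hconst : ∀ u, HasDerivAt (fun v => p v * exp (-G v)) 0 u := fun u =>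
    ((hp u).fun_mul (hG u).neg.exp).congr_deriv (by ring)
  have h := is_const_of_deriv_eq_zero (fun u => (hconst u).differentiableAt)
    (fun u => (hconst u).deriv) t s
  rw [exp_sub]
  simp only [exp_neg] at h
  field_simp at h ⊢
  exact h

theorem abs_sub_le_div_of_abs_deriv_le_mul_exp {h h' : ℝ → ℝ} {C c x : ℝ}
    (hh : ∀ t, HasDerivAt h (h' t) t) (hC : 0 ≤ C) (hc : 0 < c) (hx : 0 ≤ x)
    (bound : ∀ s ∈ Ico 0 x, |h' s| ≤ C * exp (-c * s)) : |h x - h 0| ≤ C / c := by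
  have hB : ∀ s, HasDerivAt (fun s => C / c * (1 - exp (-c * s))) (C * exp (-c * s)) s :=
    fun s => ((((hasDerivAt_id' s).const_mul (-c)).exp.const_sub 1).const_mul (C / c)).congr_deriv
      (by field_simp)
  have hle := image_norm_le_of_norm_deriv_right_le_deriv_boundary
    (f := fun s => h s - h 0) (fun s _ => ((hh s).sub_const (h 0)).continuousAt.continuousWithinAt)
    (fun s _ => ((hh s).sub_const (h 0)).hasDerivWithinAt) (by simp) hB bound
    (right_mem_Icc.2 hx)
  exact hle.trans (mul_le_of_le_one_right (div_nonneg hC hc.le) (by linarith [exp_pos (-c * x)]))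

theorem abs_le_of_hasDerivAt_neg_mul_add {f q : ℝ → ℝ} {η κ M x : ℝ}
    (hf : ∀ t, HasDerivAt f (-η * f t + q t) t) (hκ : κ ≤ η) (hx : 0 ≤ x)
    (hq : ∀ s ∈ Ico 0 x, |q s| ≤ M * exp (-κ * s)) :
    |f x| ≤ (|f 0| + M * x) * exp (-κ * x) := by
  have hu : ∀ s, HasDerivAt (fun s => f s * exp (η * s)) (exp (η * s) * q s) s := fun s =>
    ((hf s).fun_mul ((hasDerivAt_id' s).const_mul η).exp).congr_deriv (by ring)
  have hu' : ∀ s ∈ Ico 0 x, ‖exp (η * s) * q s‖ ≤ M * exp ((η - κ) * x) := fun s hs => by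
    have hM : 0 ≤ M := nonneg_of_mul_nonneg_left ((abs_nonneg _).trans (hq s hs)) (exp_pos _)
    calc ‖exp (η * s) * q s‖ = exp (η * s) * |q s| := by
          rw [Real.norm_eq_abs, abs_mul, abs_of_pos (exp_pos _)]
      _ ≤ exp (η * s) * (M * exp (-κ * s)) := by gcongr; exact hq s hs
      _ = M * exp ((η - κ) * s) := by rw [mul_left_comm, ← exp_add]; ring_nf
      _ ≤ M * exp ((η - κ) * x) := by gcongr; exact hs.2.le
  have hmvt := norm_image_sub_le_of_norm_deriv_le_segment'
    (fun s _ => (hu s).hasDerivWithinAt) hu' x (right_mem_Icc.2 hx)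
  simp only [Real.norm_eq_abs, mul_zero, exp_zero, mul_one, sub_zero] at hmvt
  have hfx : |f x| * exp (η * x) ≤ |f 0| + M * exp ((η - κ) * x) * x := by
    rw [← abs_of_pos (exp_pos (η * x)), ← abs_mul]
    linarith [abs_sub_abs_le_abs_sub (f x * exp (η * x)) (f 0)]
  have hcancel : exp ((η - κ) * x) * exp (-η * x) = exp (-κ * x) := by rw [← exp_add]; ring_nf
  calc |f x| = |f x| * exp (η * x) * exp (-η * x) := by rw [mul_assoc, ← exp_add]; simp
    _ ≤ (|f 0| + M * exp ((η - κ) * x) * x) * exp (-η * x) := by gcongr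
    _ = |f 0| * exp (-η * x) + M * x * exp (-κ * x) := by rw [← hcancel]; ring
    _ ≤ |f 0| * exp (-κ * x) + M * x * exp (-κ * x) := by gcongr
    _ = (|f 0| + M * x) * exp (-κ * x) := by ring

theorem eq_mul_exp_integral {p g : ℝ → ℝ} (c : ℝ) (hp : ∀ t, HasDerivAt p (p t * g t) t)
    (hg : Continuous g) (t : ℝ) : p t = p 0 * exp (-c * t + ∫ s in 0..t, (g s + c)) := by
  have hG : ∀ t, HasDerivAt (fun t => -c * t + ∫ s in 0..t, (g s + c)) (g t) t := fun t =>
    (((hasDerivAt_id' t).const_mul (-c)).add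
      ((show Continuous fun s => g s + c by fun_prop).integral_hasStrictDerivAt 0 t).hasDerivAt
      ).congr_deriv (by ring)
  simpa using eq_mul_exp_sub_of_hasDerivAt_mul hp hG t 0

theorem exp_half_lt_two : exp (1 / 2 : ℝ) < 2 := by
  have h : exp (1 / 2 : ℝ) * exp (1 / 2) = exp 1 := by rw [← exp_add]; norm_num
  nlinarith [exp_one_lt_d9, exp_pos (1 / 2 : ℝ)]

theorem exp_mem_Icc_of_abs_le_half {x : ℝ} (hx : |x| ≤ 1 / 2) : exp x ∈ Icc (1 / 2) 2 := by
  obtain ⟨hlo, hhi⟩ := abs_le.1 hx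
  exact ⟨by linarith [add_one_le_exp x], (exp_le_exp.2 hhi).trans exp_half_lt_two.le⟩

namespace DampedSystem

variable {η₁ η₂ K L Y₀ : ℝ} {f p q g : ℝ → ℝ}

theorem abs_integral_add_le_half (hg : ∀ t, |g t + η₂| ≤ K * max |f t| |p t|)
    (hgc : Continuous g) (hK : 0 ≤ K) (hL : 0 < L) (hY₀ : 0 ≤ Y₀) (hsmall : 8 * K * Y₀ ≤ L)
    {x : ℝ} (hx : 0 ≤ x) (hb : ∀ s ∈ Ico 0 x, max |f s| |p s| ≤ 2 * Y₀ * exp (-(L / 2) * s)) :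
    |∫ s in 0..x, (g s + η₂)| ≤ 1 / 2 := by
  have hH : ∀ t, HasDerivAt (fun t => ∫ s in 0..t, (g s + η₂)) (g t + η₂) t := fun t =>
    ((show Continuous fun s => g s + η₂ by fun_prop).integral_hasStrictDerivAt 0 t).hasDerivAt
  have hbound := abs_sub_le_div_of_abs_deriv_le_mul_exp hH (by positivity : 0 ≤ 2 * K * Y₀)
    (half_pos hL) hx fun s hs =>
      (hg s).trans ((mul_le_mul_of_nonneg_left (hb s hs) hK).trans_eq (by ring))
  rw [intervalIntegral.integral_same, sub_zero] at hbound
  refine hbound.trans ?_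
  rw [div_le_iff₀ (half_pos hL)]
  linarith

theorem abs_le_mul_exp_of_forall_Ico_le (hf : ∀ t, HasDerivAt f (-η₁ * f t + q t) t)
    (hq : ∀ t, |q t| ≤ K * max |f t| |p t| ^ 2) (hK : 0 ≤ K) (hLη₁ : L ≤ η₁)
    (hf₀ : |f 0| ≤ Y₀) (hsmall : 8 * K * Y₀ ≤ L) {x : ℝ} (hx : 0 ≤ x)
    (hb : ∀ s ∈ Ico 0 x, max |f s| |p s| ≤ 2 * Y₀ * exp (-(L / 2) * s)) :
    |f x| ≤ Y₀ * exp (-(L / 2) * x) := by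
  have hY₀ : 0 ≤ Y₀ := (abs_nonneg _).trans hf₀
  have hqb : ∀ s ∈ Ico 0 x, |q s| ≤ 4 * K * Y₀ ^ 2 * exp (-L * s) := fun s hs => by
    calc |q s| ≤ K * (2 * Y₀ * exp (-(L / 2) * s)) ^ 2 := by
          refine (hq s).trans (mul_le_mul_of_nonneg_left ?_ hK)
          exact pow_le_pow_left₀ (le_max_of_le_left (abs_nonneg _)) (hb s hs) 2
      _ = 4 * K * Y₀ ^ 2 * exp (-L * s) := by rw [mul_pow, sq (exp _), ← exp_add]; ring_nf
  calc |f x| ≤ (|f 0| + 4 * K * Y₀ ^ 2 * x) * exp (-L * x) :=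
        abs_le_of_hasDerivAt_neg_mul_add hf hLη₁ hx hqb
    _ ≤ Y₀ * exp (L / 2 * x) * exp (-L * x) := by
        -- the secular term `x e^{-L x}` is absorbed by `1 + L x / 2 ≤ e^{L x / 2}`
        gcongr
        nlinarith [mul_le_mul_of_nonneg_right hsmall (mul_nonneg hY₀ hx),
          mul_le_mul_of_nonneg_left (add_one_le_exp (L / 2 * x)) hY₀]
    _ = Y₀ * exp (-(L / 2) * x) := by rw [mul_assoc, ← exp_add]; ring_nf

theorem abs_le_mul_exp_of_abs_integral_le_half (hp : ∀ t, HasDerivAt p (p t * g t) t)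
    (hgc : Continuous g) (hL : 0 < L) (hLη₂ : L ≤ η₂) (hp₀ : |p 0| ≤ Y₀) {x : ℝ} (hx : 0 ≤ x)
    (hH : |∫ s in 0..x, (g s + η₂)| ≤ 1 / 2) :
    |p x| ≤ exp (1 / 2) * Y₀ * exp (-(L / 2) * x) := by
  have hY₀ : 0 ≤ Y₀ := (abs_nonneg _).trans hp₀
  calc |p x| = |p 0| * exp (-η₂ * x + ∫ s in 0..x, (g s + η₂)) := by
        rw [eq_mul_exp_integral η₂ hp hgc x, abs_mul, abs_of_pos (exp_pos _)]
    _ ≤ Y₀ * exp (1 / 2 + -(L / 2) * x) := by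
        gcongr ?_ * exp ?_
        linarith [(abs_le.1 hH).2, mul_le_mul_of_nonneg_right hLη₂ hx, mul_nonneg hL.le hx]
    _ = exp (1 / 2) * Y₀ * exp (-(L / 2) * x) := by rw [exp_add]; ring

theorem max_abs_lt_two_mul_exp (hf : ∀ t, HasDerivAt f (-η₁ * f t + q t) t)
    (hp : ∀ t, HasDerivAt p (p t * g t) t) (hq : ∀ t, |q t| ≤ K * max |f t| |p t| ^ 2)
    (hg : ∀ t, |g t + η₂| ≤ K * max |f t| |p t|) (hgc : Continuous g) (hK : 0 ≤ K)
    (hL : 0 < L) (hLη₁ : L ≤ η₁) (hLη₂ : L ≤ η₂) (hf₀ : |f 0| ≤ Y₀) (hp₀ : |p 0| ≤ Y₀)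
    (hY₀ : 0 < Y₀) (hsmall : 8 * K * Y₀ ≤ L) :
    ∀ x, 0 ≤ x → max |f x| |p x| < 2 * Y₀ * exp (-(L / 2) * x) := by
  have hfc : Continuous f := continuous_iff_continuousAt.2 fun t => (hf t).continuousAt
  have hpc : Continuous p := continuous_iff_continuousAt.2 fun t => (hp t).continuousAt
  refine forall_lt_of_forall_Ico_le (hfc.abs.max hpc.abs) (by fun_prop) fun x hx hb => ?_
  have hH := abs_integral_add_le_half hg hgc hK hL hY₀.le hsmall hx hb
  calc max |f x| |p x| ≤ exp (1 / 2) * Y₀ * exp (-(L / 2) * x) := by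
        refine max_le ((abs_le_mul_exp_of_forall_Ico_le hf hq hK hLη₁ hf₀ hsmall hx hb).trans ?_)
          (abs_le_mul_exp_of_abs_integral_le_half hp hgc hL hLη₂ hp₀ hx hH)
        rw [mul_assoc]
        exact le_mul_of_one_le_left (by positivity) (one_le_exp (by norm_num))
    _ < 2 * Y₀ * exp (-(L / 2) * x) := by gcongr; exact exp_half_lt_two

theorem exists_abs_le_half_eq_mul_exp (hf : ∀ t, HasDerivAt f (-η₁ * f t + q t) t)
    (hp : ∀ t, HasDerivAt p (p t * g t) t) (hq : ∀ t, |q t| ≤ K * max |f t| |p t| ^ 2)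
    (hg : ∀ t, |g t + η₂| ≤ K * max |f t| |p t|) (hgc : Continuous g) (hK : 0 ≤ K)
    (hL : 0 < L) (hLη₁ : L ≤ η₁) (hLη₂ : L ≤ η₂) (hsmall : 8 * K * max |f 0| |p 0| ≤ L)
    {t : ℝ} (ht : 0 ≤ t) : ∃ h, |h| ≤ 1 / 2 ∧ p t = p 0 * exp (-η₂ * t + h) := by
  rcases eq_or_ne (p 0) 0 with hp₀ | hp₀
  · exact ⟨0, by simp, by rw [eq_mul_exp_integral η₂ hp hgc t, hp₀, zero_mul, zero_mul]⟩
  have hY₀ : 0 < max |f 0| |p 0| := (abs_pos.2 hp₀).trans_le (le_max_right _ _)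
  have hdecay := max_abs_lt_two_mul_exp hf hp hq hg hgc hK hL hLη₁ hLη₂ (le_max_left _ _)
    (le_max_right _ _) hY₀ hsmall
  exact ⟨_, abs_integral_add_le_half hg hgc hK hL hY₀.le hsmall ht
    fun s hs => (hdecay s hs.1).le, eq_mul_exp_integral η₂ hp hgc t⟩

end DampedSystem

theorem abs_quadratic_le_mul_max_sq (α β γ u v : ℝ) :
    |α * u ^ 2 + β * v ^ 2 + γ * u * v| ≤ (|α| + |β| + |γ|) * max |u| |v| ^ 2 := by
  have hu := le_max_left |u| |v|
  have hv := le_max_right |u| |v|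
  calc |α * u ^ 2 + β * v ^ 2 + γ * u * v| ≤ |α| * |u| ^ 2 + |β| * |v| ^ 2 + |γ| * |u| * |v| := by
        refine (abs_add_three _ _ _).trans_eq ?_
        simp only [abs_mul, abs_pow]
    _ ≤ |α| * max |u| |v| ^ 2 + |β| * max |u| |v| ^ 2 + |γ| * max |u| |v| * max |u| |v| := by
        gcongr
    _ = (|α| + |β| + |γ|) * max |u| |v| ^ 2 := by ring

theorem abs_linear_le_mul_max (β γ u v : ℝ) :
    |β * u + γ * v| ≤ (|β| + |γ|) * max |u| |v| := by
  calc |β * u + γ * v| ≤ |β| * |u| + |γ| * |v| := by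
        refine (abs_add_le _ _).trans_eq ?_
        simp only [abs_mul]
    _ ≤ |β| * max |u| |v| + |γ| * max |u| |v| := by gcongr; exacts [le_max_left _ _, le_max_right _ _]
    _ = (|β| + |γ|) * max |u| |v| := by ring

theorem sis_eta_pos {lam1 lam2 mu1 mu2 : ℝ} (hmu2 : 0 < mu2) (hmu1 : 0 < mu1) (hlt : mu1 < lam1)
    (hratio : lam2 / mu2 < lam1 / mu1) : 0 < lam1 - mu1 ∧ 0 < mu2 - lam2 * mu1 / lam1 := by
  have hlam1 : 0 < lam1 := hmu1.trans hlt
  refine ⟨sub_pos.2 hlt, ?_⟩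
  rw [sub_pos, div_lt_iff₀ hlam1]
  linarith [(div_lt_div_iff₀ hmu2 hmu1).1 hratio]

theorem sis_quadratic_coeff_le {lam1 lam2 eta1 eta2 : ℝ} (hlam1 : 0 < lam1) (heta1 : 0 < eta1)
    (heta2 : 0 < eta2) :
    |-lam1| + |-(eta2 * (lam1 - lam2) / eta1)| + |lam1 - lam2 + lam1 * eta2 / eta1|
      ≤ (lam1 + |lam1 - lam2|) * (eta1 + eta2) / eta1 := by
  have hmixed : |lam1 - lam2 + lam1 * eta2 / eta1| ≤ |lam1 - lam2| + lam1 * eta2 / eta1 :=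
    (abs_add_le _ _).trans_eq (by rw [abs_of_pos (by positivity : 0 < lam1 * eta2 / eta1)])
  rw [abs_neg, abs_neg, abs_of_pos hlam1, abs_div, abs_mul, abs_of_pos heta1, abs_of_pos heta2]
  calc _ ≤ lam1 + eta2 * |lam1 - lam2| / eta1 + (|lam1 - lam2| + lam1 * eta2 / eta1) := by
        gcongr
    _ = (lam1 + |lam1 - lam2|) * (eta1 + eta2) / eta1 := by field_simp; ring

theorem sis_linear_coeff_le {lam1 lam2 eta1 eta2 : ℝ} (hlam1 : 0 < lam1) (heta1 : 0 < eta1)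
    (heta2 : 0 < eta2) :
    |-lam2| + |lam2 * (eta2 / eta1)| ≤ (lam1 + |lam1 - lam2|) * (eta1 + eta2) / eta1 := by
  have hlam2 : |lam2| ≤ lam1 + |lam1 - lam2| := by
    have := abs_sub_abs_le_abs_sub lam2 lam1
    rw [abs_sub_comm, abs_of_pos hlam1] at this
    linarith
  rw [abs_neg, abs_mul, abs_of_pos (div_pos heta2 heta1)]
  calc |lam2| + |lam2| * (eta2 / eta1) = |lam2| * (eta1 + eta2) / eta1 := by field_simp
    _ ≤ (lam1 + |lam1 - lam2|) * (eta1 + eta2) / eta1 := by gcongr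

theorem sis_second_component_eq_mul_exp {lam1 lam2 eta1 eta2 a L L1 : ℝ} {tx1 tx2 : ℝ → ℝ}
    (hlam1 : 0 < lam1) (heta1 : 0 < eta1) (heta2 : 0 < eta2) (ha : a ≠ 0) (hL : 0 < L)
    (hLη₁ : L ≤ eta1) (hLη₂ : L ≤ eta2) (hL1 : L1 = (lam1 + |lam1 - lam2|) * (eta1 + eta2) / eta1)
    (htx2nn : ∀ t, 0 ≤ tx2 t)
    (hode1 : ∀ t, HasDerivAt tx1
      (-eta1 * tx1 t - lam1 * (tx1 t) ^ 2
        - (eta2 * (lam1 - lam2) / eta1) * (tx2 t / a) ^ 2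
        + (lam1 - lam2 + lam1 * eta2 / eta1) * tx1 t * (tx2 t / a)) t)
    (hode2 : ∀ t, HasDerivAt tx2
      (-eta2 * tx2 t - lam2 * tx2 t * tx1 t + (lam2 / a) * (eta2 / eta1) * (tx2 t) ^ 2) t)
    (hy0 : max |tx1 0| (tx2 0 / |a|) ≤ L / (8 * L1)) {t : ℝ} (ht : 0 ≤ t) :
    ∃ h, |h| ≤ 1 / 2 ∧ tx2 t = tx2 0 * exp (-t * eta2 + h) := by
  have hc1 : Continuous tx1 := continuous_iff_continuousAt.2 fun t => (hode1 t).continuousAt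
  have hc2 : Continuous tx2 := continuous_iff_continuousAt.2 fun t => (hode2 t).continuousAt
  have hf : ∀ t, HasDerivAt tx1 (-eta1 * tx1 t + (-lam1 * tx1 t ^ 2
      + -(eta2 * (lam1 - lam2) / eta1) * (tx2 t / a) ^ 2
      + (lam1 - lam2 + lam1 * eta2 / eta1) * tx1 t * (tx2 t / a))) t :=
    fun t => (hode1 t).congr_deriv (by ring)
  have hp : ∀ t, HasDerivAt (fun t => tx2 t / a) (tx2 t / a *
      (-lam2 * tx1 t + lam2 * (eta2 / eta1) * (tx2 t / a) - eta2)) t :=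
    fun t => ((hode2 t).div_const a).congr_deriv (by field_simp; ring)
  have hsmall : 8 * L1 * max |tx1 0| |tx2 0 / a| ≤ L := by
    rw [abs_div, abs_of_nonneg (htx2nn 0), mul_comm, ← le_div_iff₀ (by rw [hL1]; positivity)]
    exact hy0
  obtain ⟨h, hh, hpt⟩ := DampedSystem.exists_abs_le_half_eq_mul_exp hf hp
    (fun t => (abs_quadratic_le_mul_max_sq _ _ _ _ _).trans <| by
      rw [hL1]; gcongr; exact sis_quadratic_coeff_le hlam1 heta1 heta2)
    (fun t => by
      rw [sub_add_cancel]
      refine (abs_linear_le_mul_max _ _ _ _).trans ?_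
      rw [hL1]; gcongr; exact sis_linear_coeff_le hlam1 heta1 heta2)
    (by fun_prop) (by rw [hL1]; positivity) hL hLη₁ hLη₂ hsmall ht
  refine ⟨h, hh, ?_⟩
  field_simp at hpt
  rw [hpt]
  ring_nf

theorem sis_transformed_second_component_bounds_general
    (lam1 lam2 mu1 mu2 eta1 eta2 a L L1 : ℝ)
    (hmu2 : 0 < mu2) (hmu1 : 0 < mu1) (hlt : mu1 < lam1)
    (hratio : lam2 / mu2 < lam1 / mu1)
    (heta1 : eta1 = lam1 - mu1) (heta2 : eta2 = mu2 - lam2 * mu1 / lam1)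
    (hne : eta1 ≠ eta2)
    (ha : a = 1 - eta2 / eta1)
    (hL : L = min eta1 eta2)
    (hL1 : L1 = (lam1 + |lam1 - lam2|) * (eta1 + eta2) / eta1)
    (tx1 tx2 : ℝ → ℝ) (htx2nn : ∀ t : ℝ, 0 ≤ tx2 t)
    (hode1 : ∀ t : ℝ, HasDerivAt tx1
      (-eta1 * tx1 t - lam1 * (tx1 t) ^ 2
        - (eta2 * (lam1 - lam2) / eta1) * (tx2 t / a) ^ 2
        + (lam1 - lam2 + lam1 * eta2 / eta1) * tx1 t * (tx2 t / a)) t)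
    (hode2 : ∀ t : ℝ, HasDerivAt tx2
      (-eta2 * tx2 t - lam2 * tx2 t * tx1 t + (lam2 / a) * (eta2 / eta1) * (tx2 t) ^ 2) t)
    (hy0 : max |tx1 0| (tx2 0 / |a|) ≤ L / (8 * L1)) :
    ∀ t : ℝ, 0 ≤ t →
      (1 / 2) * tx2 0 * Real.exp (-t * eta2) ≤ tx2 t ∧
      tx2 t ≤ 2 * tx2 0 * Real.exp (-t * eta2) := by
  intro t ht
  have hlam1 : 0 < lam1 := hmu1.trans hlt
  have heta1pos : 0 < eta1 := heta1 ▸ (sis_eta_pos hmu2 hmu1 hlt hratio).1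
  have heta2pos : 0 < eta2 := heta2 ▸ (sis_eta_pos hmu2 hmu1 hlt hratio).2
  have ha0 : a ≠ 0 := by
    rw [ha, sub_ne_zero, ne_comm, ne_eq, div_eq_one_iff_eq heta1pos.ne']
    exact hne.symm
  obtain ⟨h, hh, htx2⟩ := sis_second_component_eq_mul_exp hlam1 heta1pos heta2pos ha0
    (hL ▸ lt_min heta1pos heta2pos) (hL ▸ min_le_left _ _) (hL ▸ min_le_right _ _) hL1 htx2nn
    hode1 hode2 hy0 ht
  obtain ⟨hlo, hhi⟩ := exp_mem_Icc_of_abs_le_half hh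
  have hc : 0 ≤ tx2 0 * exp (-t * eta2) := mul_nonneg (htx2nn 0) (exp_pos _).le
  rw [htx2, exp_add, ← mul_assoc]
  constructor <;> nlinarith

/-- Two-sided exponential bounds for the second coordinate, case of distinct
eigenvalues: if `y(0) = max{|x̃₁(0)|, x̃₂(0)/|a|} ≤ L/(8L₁)` then
`½ x₂(0) e^{-tη₂} ≤ x₂(t) ≤ 2 x₂(0) e^{-tη₂}` for all `t ≥ 0`. -/
theorem sis_transformed_second_component_bounds
    (lam1 lam2 mu1 mu2 eta1 eta2 a L L1 : ℝ)
    (hlam2 : 0 < lam2) (hmu2 : 0 < mu2) (hmu1 : 0 < mu1) (hlt : mu1 < lam1)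
    (hratio : lam2 / mu2 < lam1 / mu1)
    (heta1 : eta1 = lam1 - mu1) (heta2 : eta2 = mu2 - lam2 * mu1 / lam1)
    (hne : eta1 ≠ eta2)
    (ha : a = 1 - eta2 / eta1)
    (hL : L = min eta1 eta2)
    (hL1 : L1 = (lam1 + |lam1 - lam2|) * (eta1 + eta2) / eta1)
    (tx1 tx2 : ℝ → ℝ) (htx2nn : ∀ t : ℝ, 0 ≤ tx2 t)
    (hode1 : ∀ t : ℝ, HasDerivAt tx1
      (-eta1 * tx1 t - lam1 * (tx1 t) ^ 2
        - (eta2 * (lam1 - lam2) / eta1) * (tx2 t / a) ^ 2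
        + (lam1 - lam2 + lam1 * eta2 / eta1) * tx1 t * (tx2 t / a)) t)
    (hode2 : ∀ t : ℝ, HasDerivAt tx2
      (-eta2 * tx2 t - lam2 * tx2 t * tx1 t + (lam2 / a) * (eta2 / eta1) * (tx2 t) ^ 2) t)
    (hy0 : max |tx1 0| (tx2 0 / |a|) ≤ L / (8 * L1)) :
    ∀ t : ℝ, 0 ≤ t →
      (1 / 2) * tx2 0 * Real.exp (-t * eta2) ≤ tx2 t ∧
      tx2 t ≤ 2 * tx2 0 * Real.exp (-t * eta2) :=
  sis_transformed_second_component_bounds_general lam1 lam2 mu1 mu2 eta1 eta2 a L L1 hmu2 hmu1 hlt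
    hratio heta1 heta2 hne ha hL hL1 tx1 tx2 htx2nn hode1 hode2 hy0
end

section
/- Suppose η_1 = η_2 (the case a = 0, i.e., λ_1 - μ_1 = μ_2 - λ_2 μ_1/λ_1). Let y(t) = e^{t(λ_1 - μ_1)/2} max{|x_1(t) - (λ_1 - μ_1)/λ_1|, x_2(t)}. If y(0) ≤ (λ_1 - μ_1)/(32(λ_1 + λ_2)), then for all t ≥ 0, |x_1(t) - (λ_1 - μ_1)/λ_1| ≤ 4 y(0) e^{-t(λ_1 - μ_1)/2} and x_2(t) ≤ 4 y(0) e^{-t(λ_1 - μ_1)/2}. -/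
/-!
In the coordinates `u = x₁ - (λ₁ - μ₁)/λ₁`, `v = x₂` and with `η = λ₁ - μ₁`, the relation
`η₁ = η₂` turns the system into `u' = -ηu - ηv - λ₁u(u + v)`, `v' = -ηv - λ₂v(u + v)`: the
linearisation is a Jordan block with double eigenvalue `-η`, so only a slower rate survives.
Compare `u`, `-u` and `4v` with the barrier `δ e^{-ηt/2}`: when one of them touches it while the
others stay below, its derivative is strictly smaller than the barrier's (the weight `4` absorbs
the coupling `-ηv`, and `λ₁δ < η/4`, `λ₂δ < η/2` control the quadratic terms). So none of them can
cross, and letting `δ ↓ 4y(0)` gives the bounds.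
-/

open Set Filter Topology Real

theorem HasDerivWithinAt.eventually_nhdsGT_lt {f g : ℝ → ℝ} {f' g' x : ℝ}
    (hf : HasDerivWithinAt f f' (Ici x) x) (hg : HasDerivWithinAt g g' (Ici x) x)
    (hfg : f x = g x) (hlt : f' < g') : ∀ᶠ z in 𝓝[>] x, f z < g z := by
  have hslope : Tendsto (slope (g - f) x) (𝓝[>] x) (𝓝 (g' - f')) :=
    (hasDerivWithinAt_iff_tendsto_slope' (lt_irrefl x)).1 (hg.sub hf).Ioi_of_Ici
  filter_upwards [hslope.eventually_const_lt (sub_pos.2 hlt), self_mem_nhdsWithin]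
    with z hz (hxz : x < z)
  rw [slope_def_field, div_pos_iff_of_pos_right (sub_pos.2 hxz)] at hz
  simpa only [Pi.sub_apply, hfg, sub_self, sub_zero, sub_pos] using hz

theorem forall_image_le_of_deriv_right_lt_deriv_boundary {ι : Type*} [Finite ι]
    {g g' : ι → ℝ → ℝ} {B B' : ℝ → ℝ} {a b : ℝ}
    (hg : ∀ i, ContinuousOn (g i) (Icc a b)) (hB : ContinuousOn B (Icc a b))
    (hg' : ∀ i, ∀ x ∈ Ico a b, HasDerivWithinAt (g i) (g' i x) (Ici x) x)
    (hB' : ∀ x ∈ Ico a b, HasDerivWithinAt B (B' x) (Ici x) x)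
    (ha : ∀ i, g i a ≤ B a)
    (bound : ∀ x ∈ Ico a b, (∀ i, g i x ≤ B x) → ∀ i, g i x = B x → g' i x < B' x) :
    ∀ x ∈ Icc a b, ∀ i, g i x ≤ B x := by
  set s := {x | ∀ i, g i x ≤ B x}
  have hclosed : IsClosed (s ∩ Icc a b) := by
    have : s ∩ Icc a b = Icc a b ∩ ⋂ i, {x ∈ Icc a b | g i x ≤ B x} := by
      ext x
      simp only [s, mem_inter_iff, mem_iInter, mem_ofPred_eq]
      exact ⟨fun ⟨h, hx⟩ => ⟨hx, fun i => ⟨hx, h i⟩⟩, fun ⟨hx, h⟩ => ⟨fun i => (h i).2, hx⟩⟩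
    rw [this]
    exact isClosed_Icc.inter (isClosed_iInter fun i => isClosed_Icc.isClosed_le (hg i) hB)
  refine fun x hx => hclosed.Icc_subset_of_forall_mem_nhdsWithin ha ?_ hx
  rintro x ⟨hxs, hx⟩
  refine eventually_all.2 fun i => ?_
  rcases (hxs i).lt_or_eq with hlt | heq
  · exact (((hg' i x hx).continuousWithinAt.tendsto.eventually_lt
      (hB' x hx).continuousWithinAt.tendsto hlt).filter_mono
      (nhdsWithin_mono _ Ioi_subset_Ici_self)).mono fun _ => le_of_lt
  · exact ((hg' i x hx).eventually_nhdsGT_lt (hB' x hx) heq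
      (bound x hx hxs i heq)).mono fun _ => le_of_lt

theorem shifted_sis_decay {η l1 l2 δ : ℝ} {u v : ℝ → ℝ} (hη : 0 < η) (hl1 : 0 ≤ l1)
    (hl2 : 0 ≤ l2) (hv : ∀ t, 0 ≤ v t)
    (hu' : ∀ t, HasDerivAt u (-η * u t - η * v t - l1 * u t * (u t + v t)) t)
    (hv' : ∀ t, HasDerivAt v (-η * v t - l2 * v t * (u t + v t)) t)
    (hδ : 0 < δ) (hu0 : |u 0| ≤ δ) (hv0 : 4 * v 0 ≤ δ) (hl1δ : l1 * δ < η / 4)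
    (hl2δ : l2 * δ < η / 2) {t : ℝ} (ht : 0 ≤ t) :
    |u t| ≤ δ * exp (-(η / 2) * t) ∧ 4 * v t ≤ δ * exp (-(η / 2) * t) := by
  set B : ℝ → ℝ := fun z => δ * exp (-(η / 2) * z)
  have hB' (z : ℝ) : HasDerivAt B (-(η / 2) * B z) z :=
    (((hasDerivAt_id' z).const_mul (-(η / 2))).exp.const_mul δ).congr_deriv (by ring)
  have hBpos (z : ℝ) : 0 < B z := by positivity
  have hBle {z : ℝ} (hz : 0 ≤ z) : B z ≤ δ :=
    mul_le_of_le_one_right hδ.le (exp_le_one_iff.2 (by nlinarith))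
  have hg' : ∀ i, ∀ z, HasDerivAt (![u, fun z => -u z, fun z => 4 * v z] i)
      (![fun z => -η * u z - η * v z - l1 * u z * (u z + v z),
        fun z => -(-η * u z - η * v z - l1 * u z * (u z + v z)),
        fun z => 4 * (-η * v z - l2 * v z * (u z + v z))] i z) z := by
    intro i z
    fin_cases i
    exacts [hu' z, (hu' z).neg, (hv' z).const_mul 4]
  have key := forall_image_le_of_deriv_right_lt_deriv_boundary (b := t)
    (fun i => HasDerivAt.continuousOn fun z _ => hg' i z) (HasDerivAt.continuousOn fun z _ => hB' z)
    (fun i z _ => (hg' i z).hasDerivWithinAt) (fun z _ => (hB' z).hasDerivWithinAt) ?_ ?_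
    t ⟨ht, le_rfl⟩
  · obtain ⟨hu, hnu, hv⟩ : u t ≤ B t ∧ -u t ≤ B t ∧ 4 * v t ≤ B t := by
      simpa [Fin.forall_fin_succ] using key
    exact ⟨abs_le.2 ⟨by linarith, hu⟩, hv⟩
  · simpa [Fin.forall_fin_succ, B] using ⟨(le_abs_self _).trans hu0, (neg_le_abs _).trans hu0, hv0⟩
  · intro x hx hle i hi
    obtain ⟨hux, hnux, hvx⟩ : u x ≤ B x ∧ -u x ≤ B x ∧ 4 * v x ≤ B x := by
      simpa [Fin.forall_fin_succ] using hle
    have hBx := hBpos x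
    have hBδ := hBle hx.1
    have hv0 := hv x
    have touch_u (h : u x = B x) :
        -η * u x - η * v x - l1 * u x * (u x + v x) < -(η / 2) * B x := by
      rw [h]; nlinarith [mul_nonneg (mul_nonneg hl1 hBx.le) (add_nonneg hBx.le hv0)]
    have touch_neg_u (h : -u x = B x) :
        -(-η * u x - η * v x - l1 * u x * (u x + v x)) < -(η / 2) * B x := by
      rw [show u x = -B x by linarith]
      nlinarith [mul_nonneg (mul_nonneg hl1 hBx.le) hv0,
        mul_lt_mul_of_pos_right (lt_of_le_of_lt (mul_le_mul_of_nonneg_left hBδ hl1) hl1δ) hBx]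
    have touch_v (h : 4 * v x = B x) :
        4 * (-η * v x - l2 * v x * (u x + v x)) < -(η / 2) * B x := by
      rw [show v x = B x / 4 by linarith]
      nlinarith [mul_le_mul_of_nonneg_left (show -B x ≤ u x + B x / 4 by linarith)
        (mul_nonneg hl2 hBx.le),
        mul_lt_mul_of_pos_right (lt_of_le_of_lt (mul_le_mul_of_nonneg_left hBδ hl2) hl2δ) hBx]
    fin_cases i
    exacts [touch_u hi, touch_neg_u hi, touch_v hi]

theorem shifted_sis_decay_of_lt {η l1 l2 y : ℝ} {u v : ℝ → ℝ} (hη : 0 < η) (hl1 : 0 ≤ l1)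
    (hl2 : 0 ≤ l2) (hv : ∀ t, 0 ≤ v t)
    (hu' : ∀ t, HasDerivAt u (-η * u t - η * v t - l1 * u t * (u t + v t)) t)
    (hv' : ∀ t, HasDerivAt v (-η * v t - l2 * v t * (u t + v t)) t)
    (hu0 : |u 0| ≤ y) (hv0 : v 0 ≤ y) (hl1y : l1 * (4 * y) < η / 4)
    (hl2y : l2 * (4 * y) < η / 2) {t : ℝ} (ht : 0 ≤ t) :
    |u t| ≤ 4 * y * exp (-(η / 2) * t) ∧ 4 * v t ≤ 4 * y * exp (-(η / 2) * t) := by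
  have hy : 0 ≤ 4 * y := by linarith [abs_nonneg (u 0)]
  have hcont (l : ℝ) : Tendsto (fun δ => l * δ) (𝓝[>] (4 * y)) (𝓝 (l * (4 * y))) :=
    ((continuous_const.mul continuous_id).tendsto _).mono_left nhdsWithin_le_nhds
  have hdecay : ∀ᶠ δ in 𝓝[>] (4 * y),
      |u t| ≤ δ * exp (-(η / 2) * t) ∧ 4 * v t ≤ δ * exp (-(η / 2) * t) := by
    filter_upwards [(hcont l1).eventually_lt_const hl1y, (hcont l2).eventually_lt_const hl2y,
      self_mem_nhdsWithin] with δ h1 h2 (hδ : 4 * y < δ)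
    exact shifted_sis_decay hη hl1 hl2 hv hu' hv' (hy.trans_lt hδ) (by linarith) (by linarith)
      h1 h2 ht
  have hlim : Tendsto (fun δ => δ * exp (-(η / 2) * t)) (𝓝[>] (4 * y))
      (𝓝 (4 * y * exp (-(η / 2) * t))) :=
    ((continuous_id.mul continuous_const).tendsto _).mono_left nhdsWithin_le_nhds
  exact ⟨ge_of_tendsto hlim (hdecay.mono fun _ h => h.1),
    ge_of_tendsto hlim (hdecay.mono fun _ h => h.2)⟩

theorem sis_field_fst_eq {lam1 mu1 : ℝ} (hlam1 : lam1 ≠ 0) (x1 x2 : ℝ) :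
    lam1 * x1 * (1 - x1 - x2) - mu1 * x1 =
      -(lam1 - mu1) * (x1 - (lam1 - mu1) / lam1) - (lam1 - mu1) * x2
        - lam1 * (x1 - (lam1 - mu1) / lam1) * (x1 - (lam1 - mu1) / lam1 + x2) := by
  field_simp
  ring

theorem sis_field_snd_eq {lam1 lam2 mu1 mu2 : ℝ} (hlam1 : lam1 ≠ 0)
    (heq : lam1 - mu1 = mu2 - lam2 * mu1 / lam1) (x1 x2 : ℝ) :
    lam2 * x2 * (1 - x1 - x2) - mu2 * x2 =
      -(lam1 - mu1) * x2 - lam2 * x2 * (x1 - (lam1 - mu1) / lam1 + x2) := by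
  nth_rw 1 [heq]
  field_simp
  ring

theorem sis_repeated_eigenvalue_decay_general
    (lam1 lam2 mu1 mu2 : ℝ)
    (hlam2 : 0 < lam2) (hmu1 : 0 < mu1) (hlt : mu1 < lam1)
    (heq : lam1 - mu1 = mu2 - lam2 * mu1 / lam1)
    (x1 x2 : ℝ → ℝ) (hx2nn : ∀ t : ℝ, 0 ≤ x2 t)
    (hode1 : ∀ t : ℝ, HasDerivAt x1 (lam1 * x1 t * (1 - x1 t - x2 t) - mu1 * x1 t) t)
    (hode2 : ∀ t : ℝ, HasDerivAt x2 (lam2 * x2 t * (1 - x1 t - x2 t) - mu2 * x2 t) t)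
    (hy0 : max |x1 0 - (lam1 - mu1) / lam1| (x2 0) ≤ (lam1 - mu1) / (32 * (lam1 + lam2))) :
    ∀ t : ℝ, 0 ≤ t →
      |x1 t - (lam1 - mu1) / lam1|
          ≤ 4 * max |x1 0 - (lam1 - mu1) / lam1| (x2 0) * Real.exp (-t * (lam1 - mu1) / 2) ∧
      x2 t ≤ 4 * max |x1 0 - (lam1 - mu1) / lam1| (x2 0) * Real.exp (-t * (lam1 - mu1) / 2) := by
  intro t ht
  have hlam1 : 0 < lam1 := hmu1.trans hlt
  set y := max |x1 0 - (lam1 - mu1) / lam1| (x2 0)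
  have hy : 0 ≤ y := (abs_nonneg _).trans (le_max_left _ _)
  have hsmall : 32 * (lam1 + lam2) * y ≤ lam1 - mu1 := (le_div_iff₀' (by positivity)).1 hy0
  obtain ⟨hu, hv⟩ := shifted_sis_decay_of_lt (u := fun t => x1 t - (lam1 - mu1) / lam1)
    (sub_pos.2 hlt) hlam1.le hlam2.le hx2nn
    (fun t => ((hode1 t).sub_const _).congr_deriv (sis_field_fst_eq hlam1.ne' _ _))
    (fun t => (hode2 t).congr_deriv (sis_field_snd_eq hlam1.ne' heq _ _))
    (le_max_left _ _) (le_max_right _ _) (by nlinarith [mul_nonneg hlam2.le hy])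
    (by nlinarith [mul_nonneg hlam1.le hy]) ht
  rw [show -t * (lam1 - mu1) / 2 = -((lam1 - mu1) / 2) * t by ring]
  exact ⟨hu, by linarith [hx2nn t]⟩

/-- Exponential decay in the repeated-eigenvalue case `η₁ = η₂` (`a = 0`): if
`y(0) = max{|x₁(0) - (λ₁-μ₁)/λ₁|, x₂(0)} ≤ (λ₁-μ₁)/(32(λ₁+λ₂))` then for all
`t ≥ 0`, `|x₁(t) - (λ₁-μ₁)/λ₁| ≤ 4y(0)e^{-t(λ₁-μ₁)/2}` and `x₂(t) ≤ 4y(0)e^{-t(λ₁-μ₁)/2}`. -/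
theorem sis_repeated_eigenvalue_decay
    (lam1 lam2 mu1 mu2 : ℝ)
    (hlam2 : 0 < lam2) (hmu2 : 0 < mu2) (hmu1 : 0 < mu1) (hlt : mu1 < lam1)
    (heq : lam1 - mu1 = mu2 - lam2 * mu1 / lam1)
    (x1 x2 : ℝ → ℝ) (hx2nn : ∀ t : ℝ, 0 ≤ x2 t)
    (hode1 : ∀ t : ℝ, HasDerivAt x1 (lam1 * x1 t * (1 - x1 t - x2 t) - mu1 * x1 t) t)
    (hode2 : ∀ t : ℝ, HasDerivAt x2 (lam2 * x2 t * (1 - x1 t - x2 t) - mu2 * x2 t) t)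
    (hy0 : max |x1 0 - (lam1 - mu1) / lam1| (x2 0) ≤ (lam1 - mu1) / (32 * (lam1 + lam2))) :
    ∀ t : ℝ, 0 ≤ t →
      |x1 t - (lam1 - mu1) / lam1|
          ≤ 4 * max |x1 0 - (lam1 - mu1) / lam1| (x2 0) * Real.exp (-t * (lam1 - mu1) / 2) ∧
      x2 t ≤ 4 * max |x1 0 - (lam1 - mu1) / lam1| (x2 0) * Real.exp (-t * (lam1 - mu1) / 2) :=
  sis_repeated_eigenvalue_decay_general lam1 lam2 mu1 mu2 hlam2 hmu1 hlt heq x1 x2 hx2nn hode1 hode2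
    hy0
end

section
/- For the logistic ODE dy/dt = λ y (1 - y) - μ y with λ > μ > 0: if y(0) ≥ (λ-μ)/λ then |y(t) - (λ-μ)/λ| ≤ |y(0) - (λ-μ)/λ| e^{-(λ-μ)t} and (λ-μ)/λ ≤ y(t) ≤ y(0) for all t ≥ 0; if 0 < y(0) ≤ (λ-μ)/λ then |y(t) - (λ-μ)/λ| ≤ ((λ-μ)/(λ y(0))) |y(0) - (λ-μ)/λ| e^{-(λ-μ)t} and y(0) ≤ y(t) ≤ (λ-μ)/λ for all t ≥ 0. -/
/-! Writing `K = (λ-μ)/λ` and `e = exp (-(λ-μ) t)`, the substitution `u = 1/y` turns the logistic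
equation into the linear equation `u' = λ - (λ-μ) u`, so `(λ-μ)/y - λ` decays exactly like `e`.
Clearing denominators gives the identity `(y t - K) y 0 = (y 0 - K) e y t`; here `y` stays positive,
being of the form `y' = g y` with `g` continuous. Since `0 < e ≤ 1`, this identity shows that `y t - K` has the
sign of `y 0 - K`, that `y t` lies between `y 0` and `K`, and it yields both exponential bounds. -/

open Real

theorem eq_mul_exp_integral_of_hasDerivAt_s13 {y g : ℝ → ℝ} (hg : Continuous g)
    (hy : ∀ t, HasDerivAt y (g t * y t) t) (t : ℝ) :
    y t = y 0 * exp (∫ s in (0 : ℝ)..t, g s) := by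
  set G : ℝ → ℝ := fun t => ∫ s in (0 : ℝ)..t, g s
  have hG : ∀ t, HasDerivAt G (g t) t := fun t =>
    (hg.integral_hasStrictDerivAt 0 t).hasDerivAt
  have hconst : ∀ t, HasDerivAt (fun t => y t * exp (-G t)) 0 t := fun t =>
    ((hy t).mul (hG t).neg.exp).congr_deriv (by simp only [Pi.neg_apply]; ring)
  have key := is_const_of_deriv_eq_zero (fun t => (hconst t).differentiableAt)
    (fun t => (hconst t).deriv) t 0
  simp only [G, intervalIntegral.integral_same, neg_zero, exp_zero, mul_one] at key
  rw [← key, mul_assoc, ← exp_add, neg_add_cancel, exp_zero, mul_one]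

theorem eq_mul_exp_of_hasDerivAt {v : ℝ → ℝ} {a : ℝ} (hv : ∀ t, HasDerivAt v (a * v t) t)
    (t : ℝ) : v t = v 0 * exp (a * t) := by
  simpa [mul_comm] using eq_mul_exp_integral_of_hasDerivAt_s13 continuous_const hv t

section Logistic

variable {lam mu : ℝ} {y : ℝ → ℝ}
  (hode : ∀ t, HasDerivAt y (lam * y t * (1 - y t) - mu * y t) t)
include hode

theorem logistic_pos (hy0 : 0 < y 0) (t : ℝ) : 0 < y t := by
  have hy : Continuous y := continuous_iff_continuousAt.2 fun t => (hode t).continuousAt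
  have hrate : ∀ t, HasDerivAt y ((lam * (1 - y t) - mu) * y t) t := fun t =>
    (hode t).congr_deriv (by ring)
  rw [eq_mul_exp_integral_of_hasDerivAt_s13 (by fun_prop) hrate t]
  positivity

theorem logistic_deviation_eq (hy0 : 0 < y 0) (hlam : lam ≠ 0) (t : ℝ) :
    (y t - (lam - mu) / lam) * y 0 =
      (y 0 - (lam - mu) / lam) * exp (-(lam - mu) * t) * y t := by
  have hpos := logistic_pos hode hy0
  have hlin : ∀ t, HasDerivAt (fun t => (lam - mu) / y t - lam)
      (-(lam - mu) * ((lam - mu) / y t - lam)) t := fun t => by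
    have hyt := (hpos t).ne'
    refine ((((hode t).inv hyt).const_mul (lam - mu)).sub_const lam).congr_deriv ?_
    field_simp
    ring
  have key := eq_mul_exp_of_hasDerivAt hlin t
  have hyt := (hpos t).ne'
  field_simp at key ⊢
  linear_combination (-1 : ℝ) * key

end Logistic

/-- Monotone convergence bounds for the logistic ODE `dy/dt = λy(1-y) - μy`, `λ > μ > 0`:
if `y(0) ≥ (λ-μ)/λ` then `|y(t) - (λ-μ)/λ| ≤ |y(0) - (λ-μ)/λ| e^{-(λ-μ)t}` and
`(λ-μ)/λ ≤ y(t) ≤ y(0)`; if `0 < y(0) ≤ (λ-μ)/λ` then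
`|y(t) - (λ-μ)/λ| ≤ ((λ-μ)/(λy(0)))|y(0) - (λ-μ)/λ| e^{-(λ-μ)t}` and
`y(0) ≤ y(t) ≤ (λ-μ)/λ`, for all `t ≥ 0`. -/
theorem logistic_ode_convergence_bounds
    (lam mu : ℝ) (hmu : 0 < mu) (hlt : mu < lam)
    (y : ℝ → ℝ) (hy0 : 0 < y 0)
    (hode : ∀ t : ℝ, HasDerivAt y (lam * y t * (1 - y t) - mu * y t) t) :
    ∀ t : ℝ, 0 ≤ t →
      ((lam - mu) / lam ≤ y 0 →
        |y t - (lam - mu) / lam| ≤ |y 0 - (lam - mu) / lam| * Real.exp (-(lam - mu) * t) ∧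
        (lam - mu) / lam ≤ y t ∧ y t ≤ y 0) ∧
      (y 0 ≤ (lam - mu) / lam →
        |y t - (lam - mu) / lam|
            ≤ ((lam - mu) / (lam * y 0)) * |y 0 - (lam - mu) / lam|
                * Real.exp (-(lam - mu) * t) ∧
        y 0 ≤ y t ∧ y t ≤ (lam - mu) / lam) := by
  intro t ht
  have hlam : 0 < lam := hmu.trans hlt
  have hyt := logistic_pos hode hy0 t
  have hdev := logistic_deviation_eq hode hy0 hlam.ne' t
  set K := (lam - mu) / lam
  set e := exp (-(lam - mu) * t)
  have he0 : 0 < e := exp_pos _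
  have he1 : e ≤ 1 := exp_le_one_iff.2 (by nlinarith)
  have hK0 : 0 < K := div_pos (sub_pos.2 hlt) hlam
  refine ⟨fun hK => ?_, fun hK => ?_⟩
  · have hdK : 0 ≤ y 0 - K := sub_nonneg.2 hK
    have hge : K ≤ y t := by nlinarith [mul_nonneg (mul_nonneg hdK he0.le) hyt.le]
    have hle : y t ≤ y 0 := by nlinarith [mul_le_mul_of_nonneg_left he1 (mul_nonneg hdK hyt.le)]
    refine ⟨?_, hge, hle⟩
    rw [abs_of_nonneg (sub_nonneg.2 hge), abs_of_nonneg hdK]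
    nlinarith [mul_le_mul_of_nonneg_left hle (mul_nonneg hdK he0.le)]
  · have hdK : 0 ≤ K - y 0 := sub_nonneg.2 hK
    have hle : y t ≤ K := by nlinarith [mul_nonneg (mul_nonneg hdK he0.le) hyt.le]
    have hge : y 0 ≤ y t := by nlinarith [mul_le_mul_of_nonneg_left he1 (mul_nonneg hdK hyt.le)]
    refine ⟨?_, hge, hle⟩
    rw [abs_of_nonpos (sub_nonpos.2 hle), abs_of_nonpos (sub_nonpos.2 hK), neg_sub, neg_sub,
      ← div_div, div_mul_eq_mul_div, div_mul_eq_mul_div, le_div_iff₀ hy0]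
    nlinarith [mul_le_mul_of_nonneg_left hle (mul_nonneg hdK he0.le)]
end

section
/- If y : [0,∞) → [0,∞) is continuous and satisfies y(t) ≤ y(0) + L_1 ∫_0^t y(s)^2 e^{-Ls} ds for all t ≥ 0, where L, L_1 > 0, and z is the solution of z(t) = z(0) + L_1 ∫_0^t z(s)^2 e^{-Ls} ds with y(0) ≤ z(0) ≤ L/(2 L_1), then y(t) ≤ z(t) ≤ 2 z(0) for all t ≥ 0. -/
open Set

set_option maxHeartbeats 1000000

private lemma gron_le_zero {f f' : ℝ → ℝ} {K a b : ℝ}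
    (hf : ContinuousOn f (Set.Icc a b))
    (hd : ∀ x ∈ Set.Ico a b, HasDerivWithinAt f (f' x) (Set.Ici x) x)
    (ha : f a ≤ 0) (bound : ∀ x ∈ Set.Ico a b, f' x ≤ K * f x) :
    ∀ x ∈ Set.Icc a b, f x ≤ 0 := by
  intro x hx
  have h := le_gronwallBound_of_liminf_deriv_right_le (δ := 0) (ε := 0) hf
    (fun x hx _r hr => (hd x hx).liminf_right_slope_le hr) ha
    (fun x hx => by simpa using bound x hx) x hx
  simpa [gronwallBound_ε0_δ0] using h

/-- Comparison argument: if `y ≥ 0` is continuous and satisfies the integral inequality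
`y(t) ≤ y(0) + L₁∫₀ᵗ y(s)² e^{-Ls} ds`, and `z` solves the corresponding integral
equation with `y(0) ≤ z(0) ≤ L/(2L₁)`, then `y(t) ≤ z(t) ≤ 2z(0)` for all `t ≥ 0`. -/
theorem integral_inequality_comparison
    (L L1 : ℝ) (hL : 0 < L) (hL1 : 0 < L1)
    (y z : ℝ → ℝ) (hyc : Continuous y) (hzc : Continuous z)
    (hynn : ∀ t : ℝ, 0 ≤ t → 0 ≤ y t)
    (hy : ∀ t : ℝ, 0 ≤ t →
      y t ≤ y 0 + L1 * ∫ s in (0:ℝ)..t, (y s) ^ 2 * Real.exp (-L * s))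
    (hz : ∀ t : ℝ, 0 ≤ t →
      z t = z 0 + L1 * ∫ s in (0:ℝ)..t, (z s) ^ 2 * Real.exp (-L * s))
    (h1 : y 0 ≤ z 0) (h2 : z 0 ≤ L / (2 * L1)) :
    ∀ t : ℝ, 0 ≤ t → y t ≤ z t ∧ z t ≤ 2 * z 0 := by
  have hec : Continuous fun s : ℝ => Real.exp (-L * s) :=
    Real.continuous_exp.comp (continuous_const.mul continuous_id)
  have hepos : ∀ s : ℝ, 0 < Real.exp (-L * s) := fun s => Real.exp_pos _
  have hele : ∀ s : ℝ, 0 ≤ s → Real.exp (-L * s) ≤ 1 := by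
    intro s hs
    calc Real.exp (-L * s) ≤ Real.exp 0 := Real.exp_le_exp.mpr (by nlinarith)
    _ = 1 := Real.exp_zero
  have hgyc : Continuous fun s => y s ^ 2 * Real.exp (-L * s) := (hyc.pow 2).mul hec
  have hgzc : Continuous fun s => z s ^ 2 * Real.exp (-L * s) := (hzc.pow 2).mul hec
  have hIy : ∀ t : ℝ, HasDerivAt (fun u => ∫ s in (0:ℝ)..u, y s ^ 2 * Real.exp (-L * s))
      (y t ^ 2 * Real.exp (-L * t)) t := fun t =>
    intervalIntegral.integral_hasDerivAt_right (hgyc.intervalIntegrable _ _)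
      (hgyc.stronglyMeasurableAtFilter _ _) hgyc.continuousAt
  have hIz : ∀ t : ℝ, HasDerivAt (fun u => ∫ s in (0:ℝ)..u, z s ^ 2 * Real.exp (-L * s))
      (z t ^ 2 * Real.exp (-L * t)) t := fun t =>
    intervalIntegral.integral_hasDerivAt_right (hgzc.intervalIntegrable _ _)
      (hgzc.stronglyMeasurableAtFilter _ _) hgzc.continuousAt
  set Y : ℝ → ℝ := fun t => y 0 + L1 * ∫ s in (0:ℝ)..t, y s ^ 2 * Real.exp (-L * s) with hYdef
  have hY : ∀ t : ℝ, HasDerivAt Y (L1 * (y t ^ 2 * Real.exp (-L * t))) t := fun t =>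
    ((hIy t).const_mul L1).const_add (y 0)
  have hzd : ∀ x : ℝ, 0 ≤ x →
      HasDerivWithinAt z (L1 * (z x ^ 2 * Real.exp (-L * x))) (Set.Ici x) x := by
    intro x hx
    have h := (((hIz x).const_mul L1).const_add (z 0)).hasDerivWithinAt (s := Set.Ici x)
    exact h.congr (fun u hu => hz u (hx.trans hu)) (hz x hx)
  have hz0le : ∀ t : ℝ, 0 ≤ t → z 0 ≤ z t := by
    intro t ht
    rw [hz t ht]
    have h0 : 0 ≤ ∫ s in (0:ℝ)..t, z s ^ 2 * Real.exp (-L * s) :=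
      intervalIntegral.integral_nonneg ht (fun s _ => by positivity)
    nlinarith
  have hy0 : 0 ≤ z 0 := le_trans (hynn 0 le_rfl) h1
  have znn : ∀ t : ℝ, 0 ≤ t → 0 ≤ z t := fun t ht => hy0.trans (hz0le t ht)
  -- Step B : z t ≤ 2 * z 0
  have stepB : ∀ t : ℝ, 0 ≤ t → z t ≤ 2 * z 0 := by
    intro t ht
    rcases eq_or_lt_of_le hy0 with hz0 | hz0
    · -- z 0 = 0, show z ≡ 0
      obtain ⟨xm, hxmI, hxmax⟩ := isCompact_Icc.exists_isMaxOn (Set.nonempty_Icc.mpr ht)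
        hzc.continuousOn
      have hzt : z t ≤ 0 := by
        refine gron_le_zero (f' := fun x => L1 * (z x ^ 2 * Real.exp (-L * x)))
          (K := L1 * z xm) hzc.continuousOn (fun x hx => hzd x hx.1)
          (by rw [← hz0]) ?_ t ⟨ht, le_rfl⟩
        intro x hx
        show L1 * (z x ^ 2 * Real.exp (-L * x)) ≤ L1 * z xm * z x
        have hx0 := hx.1
        have h1' := znn x hx0
        have h2' : z x ≤ z xm := hxmax ⟨hx.1, hx.2.le⟩
        have e1 : z x ^ 2 * Real.exp (-L * x) ≤ z x ^ 2 * 1 :=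
          mul_le_mul_of_nonneg_left (hele x hx0) (sq_nonneg _)
        have e2 : z x * z x ≤ z xm * z x := mul_le_mul_of_nonneg_right h2' h1'
        nlinarith [e1, e2]
      have := znn t ht
      nlinarith
    · -- 0 < z 0
      have hzpos : ∀ s : ℝ, 0 ≤ s → 0 < z s := fun s hs => lt_of_lt_of_le hz0 (hz0le s hs)
      have hgc : Continuous fun s : ℝ => -(L1 * Real.exp (-L * s)) :=
        (continuous_const.mul hec).neg
      have key : ∫ s in (0:ℝ)..t, -(L1 * Real.exp (-L * s)) = (z t)⁻¹ - (z 0)⁻¹ := by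
        apply intervalIntegral.integral_eq_sub_of_hasDeriv_right_of_le ht
        · exact hzc.continuousOn.inv₀ (fun s hs => (hzpos s hs.1).ne')
        · intro x hx
          have hzne : z x ≠ 0 := (hzpos x hx.1.le).ne'
          have h := ((hzd x hx.1.le).mono Set.Ioi_subset_Ici_self).inv hzne
          convert h using 1
          case e'_9 =>
            field_simp
          all_goals rfl
        · exact hgc.intervalIntegrable _ _
      have hFd : ∀ x : ℝ, HasDerivAt (fun s => L1 / L * Real.exp (-L * s))
          (-(L1 * Real.exp (-L * x))) x := by
        intro x
        have h0 : HasDerivAt (fun s : ℝ => -L * s) (-L) x := by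
          simpa using (hasDerivAt_id x).const_mul (-L)
        have h1' := (h0.exp).const_mul (L1 / L)
        convert h1' using 1
        case e'_9 =>
          field_simp
        all_goals rfl
      have hFint : ∫ s in (0:ℝ)..t, -(L1 * Real.exp (-L * s))
          = L1 / L * Real.exp (-L * t) - L1 / L * Real.exp (-L * 0) :=
        intervalIntegral.integral_eq_sub_of_hasDerivAt (fun x _ => hFd x)
          (hgc.intervalIntegrable _ _)
      have heq : (z t)⁻¹ - (z 0)⁻¹ = L1 / L * Real.exp (-L * t) - L1 / L := by
        rw [← key, hFint]; simp
      have hL1L : L1 / L ≤ (2 * z 0)⁻¹ := by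
        rw [inv_eq_one_div, div_le_div_iff₀ hL (by positivity)]
        nlinarith [(le_div_iff₀ (by positivity : (0:ℝ) < 2 * L1)).mp h2]
      have h5 : (2 * z 0)⁻¹ ≤ (z t)⁻¹ := by
        have hp : 0 ≤ L1 / L * Real.exp (-L * t) := by positivity
        have hz0inv : (z 0)⁻¹ = 2 * (2 * z 0)⁻¹ := by
          rw [mul_inv]; field_simp
        linarith
      have h6 := inv_anti₀ (by positivity) h5
      simpa using h6
  -- Step C : y t ≤ z t
  have stepC : ∀ t : ℝ, 0 ≤ t → y t ≤ z t := by
    intro T hT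
    by_contra hcon
    push_neg at hcon
    have hDT : 0 < Y T - z T := by
      have h := hy T hT
      show 0 < (y 0 + L1 * ∫ s in (0:ℝ)..T, y s ^ 2 * Real.exp (-L * s)) - z T
      linarith
    have hYc : Continuous Y :=
      continuous_const.add (continuous_const.mul
        (intervalIntegral.continuous_primitive (fun a b => hgyc.intervalIntegrable a b) 0))
    have hDc : Continuous fun s => Y s - z s := hYc.sub hzc
    set S : Set ℝ := Set.Icc 0 T ∩ {s | Y s - z s ≤ 0} with hSdef
    have hY00 : Y 0 = y 0 := by
      show y 0 + L1 * ∫ s in (0:ℝ)..(0:ℝ), y s ^ 2 * Real.exp (-L * s) = y 0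
      rw [intervalIntegral.integral_same]; ring
    have hS0 : (0:ℝ) ∈ S := by
      refine ⟨⟨le_rfl, hT⟩, ?_⟩
      show Y 0 - z 0 ≤ 0
      rw [hY00]; linarith
    have hSc : IsClosed S := isClosed_Icc.inter (isClosed_le hDc continuous_const)
    have hSb : BddAbove S := ⟨T, fun x hx => hx.1.2⟩
    set t0 := sSup S with ht0def
    have ht0S : t0 ∈ S := hSc.csSup_mem ⟨0, hS0⟩ hSb
    have ht00 : 0 ≤ t0 := ht0S.1.1
    have hDt0le : Y t0 - z t0 ≤ 0 := ht0S.2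
    have ht0T : t0 < T := by
      rcases lt_or_eq_of_le ht0S.1.2 with h | h
      · exact h
      · rw [h] at hDt0le; linarith
    have hpos : ∀ x : ℝ, t0 < x → x ≤ T → 0 < Y x - z x := by
      intro x h1x h2x
      by_contra hh
      push_neg at hh
      have hxS : x ∈ S := ⟨⟨ht00.trans h1x.le, h2x⟩, hh⟩
      exact absurd (le_csSup hSb hxS) (not_le.mpr h1x)
    have hDt0 : Y t0 - z t0 = 0 := by
      refine le_antisymm hDt0le ?_
      have htd : Filter.Tendsto (fun s => Y s - z s) (nhdsWithin t0 (Set.Ioi t0))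
          (nhds (Y t0 - z t0)) := (hDc.tendsto t0).mono_left nhdsWithin_le_nhds
      have hev : ∀ᶠ x in nhdsWithin t0 (Set.Ioi t0), 0 ≤ Y x - z x := by
        filter_upwards [Ioc_mem_nhdsGT_of_mem ⟨le_rfl, ht0T⟩] with x hx
        exact (hpos x hx.1 hx.2).le
      exact ge_of_tendsto htd hev
    obtain ⟨xm, hxmI, hxmax⟩ := isCompact_Icc.exists_isMaxOn (Set.nonempty_Icc.mpr hT)
      ((hYc.add hzc).continuousOn)
    have hfinal : Y T - z T ≤ 0 := by
      refine gron_le_zero (f := fun s => Y s - z s)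
        (f' := fun x => L1 * (y x ^ 2 * Real.exp (-L * x)) - L1 * (z x ^ 2 * Real.exp (-L * x)))
        (K := L1 * (Y xm + z xm)) hDc.continuousOn ?_ (le_of_eq hDt0) ?_ T ⟨ht0T.le, le_rfl⟩
      · intro x hx
        exact ((hY x).hasDerivWithinAt).sub (hzd x (ht00.trans hx.1))
      · intro x hx
        show L1 * (y x ^ 2 * Real.exp (-L * x)) - L1 * (z x ^ 2 * Real.exp (-L * x))
          ≤ L1 * (Y xm + z xm) * (Y x - z x)
        have hx0 : 0 ≤ x := ht00.trans hx.1
        have hyx := hynn x hx0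
        have hzx := znn x hx0
        have hyYx : y x ≤ Y x := hy x hx0
        have hex := hepos x
        have hex1 := hele x hx0
        have hY2 : y x ^ 2 ≤ Y x ^ 2 := by nlinarith
        rcases eq_or_lt_of_le hx.1 with rfl | hlt
        · -- x = t0 : Y t0 = z t0
          have hYz : Y t0 = z t0 := by linarith
          have h3 : y t0 ^ 2 ≤ z t0 ^ 2 := by rw [← hYz]; exact hY2
          rw [hYz]
          nlinarith [mul_le_mul_of_nonneg_left h3 (mul_pos hL1 (hepos t0)).le]
        · have hD := hpos x hlt hx.2.le
          have hB : Y x + z x ≤ Y xm + z xm := hxmax ⟨hx0, hx.2.le⟩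
          have hYnn : 0 ≤ Y x := hyx.trans hyYx
          have c1 : L1 * (y x ^ 2 * Real.exp (-L * x)) - L1 * (z x ^ 2 * Real.exp (-L * x))
              ≤ L1 * Real.exp (-L * x) * ((Y x + z x) * (Y x - z x)) := by
            nlinarith [mul_le_mul_of_nonneg_left hY2 (mul_pos hL1 hex).le]
          have hp1 : 0 ≤ (Y x + z x) * (Y x - z x) := mul_nonneg (by linarith) hD.le
          have e3 : Real.exp (-L * x) * ((Y x + z x) * (Y x - z x))
              ≤ (Y x + z x) * (Y x - z x) := by nlinarith
          have e4 : (Y x + z x) * (Y x - z x) ≤ (Y xm + z xm) * (Y x - z x) :=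
            mul_le_mul_of_nonneg_right hB hD.le
          nlinarith [mul_le_mul_of_nonneg_left (e3.trans e4) hL1.le]
    linarith
  exact fun t ht => ⟨stepC t ht, stepB t ht⟩
end

section
/- (Drift of the ratio.) For the two-strain stochastic SIS competition chain with μ_1 = μ_2 = 1, the generator applied to the function Q(X_1, X_2) = X_1/X_2 at a state with X_2 ≥ 2 and X_1 + X_2 ≤ N equals g_N(X) = (1 - X_1/N - X_2/N)(λ_1 X_1/X_2 - λ_2 X_1/(X_2+1)) - X_1/X_2 + X_1/(X_2-1); moreover if λ_1 > λ_2 then g_N(X) ≥ 0, and g_N(X) ≤ (X_1/X_2)(λ_1 - λ_2 + λ_2/(X_2+1) + 1/(X_2-1)). -/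
/-- Generator of the two-strain SIS competition chain applied to `Q(X₁,X₂) = X₁/X₂`:
the sum over transitions of rate × (change in `Q`). -/
noncomputable def ratioDrift (N X1 X2 : ℕ) (lam1 lam2 : ℝ) : ℝ :=
  lam1 * X1 * (1 - (X1 : ℝ) / N - (X2 : ℝ) / N) * (((X1 : ℝ) + 1) / X2 - (X1 : ℝ) / X2)
    + lam2 * X2 * (1 - (X1 : ℝ) / N - (X2 : ℝ) / N)
        * ((X1 : ℝ) / ((X2 : ℝ) + 1) - (X1 : ℝ) / X2)
    + X1 * (((X1 : ℝ) - 1) / X2 - (X1 : ℝ) / X2)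
    + X2 * ((X1 : ℝ) / ((X2 : ℝ) - 1) - (X1 : ℝ) / X2)

/-!
Writing `S = 1 - X₁/N - X₂/N` for the susceptible fraction, the four transitions change `Q` by
`1/X₂`, `-X₁/(X₂(X₂+1))`, `-1/X₂` and `X₁/(X₂(X₂-1))`; multiplying by the rates gives the closed
form. When `λ₁ > λ₂ > 0` the infection part `λ₁X₁/X₂ - λ₂X₁/(X₂+1)` is nonnegative, and so is the
recovery part `X₁/(X₂-1) - X₁/X₂`. Since `0 ≤ S ≤ 1` the drift lies between the recovery part and
the sum of both parts, and that sum factors as `(X₁/X₂)(λ₁ - λ₂ + λ₂/(X₂+1) + 1/(X₂-1))`.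
-/

theorem ratioDrift_eq (N X1 X2 : ℕ) (lam1 lam2 : ℝ) (hX2 : 2 ≤ X2) :
    ratioDrift N X1 X2 lam1 lam2
      = (1 - (X1 : ℝ) / N - (X2 : ℝ) / N) * (lam1 * X1 / X2 - lam2 * X1 / ((X2 : ℝ) + 1))
        - (X1 : ℝ) / X2 + (X1 : ℝ) / ((X2 : ℝ) - 1) := by
  have hX2' : (2 : ℝ) ≤ X2 := by exact_mod_cast hX2
  have h0 : (X2 : ℝ) ≠ 0 := by positivity
  have h1 : (X2 : ℝ) - 1 ≠ 0 := by linarith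
  unfold ratioDrift
  field_simp
  ring

theorem one_sub_div_sub_div_nonneg {N X1 X2 : ℕ} (hsum : X1 + X2 ≤ N) :
    0 ≤ 1 - (X1 : ℝ) / N - (X2 : ℝ) / N := by
  have hsum' : (X1 : ℝ) + X2 ≤ N := by exact_mod_cast hsum
  have := div_le_one_of_le₀ hsum' (Nat.cast_nonneg N)
  rw [add_div] at this
  linarith

theorem one_sub_div_sub_div_le_one (N X1 X2 : ℕ) :
    1 - (X1 : ℝ) / N - (X2 : ℝ) / N ≤ 1 := by
  have : 0 ≤ (X1 : ℝ) / N := by positivity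
  have : 0 ≤ (X2 : ℝ) / N := by positivity
  linarith

theorem mul_div_sub_mul_div_add_one_nonneg {x y a b : ℝ} (hx : 0 ≤ x) (hy : 0 < y)
    (hb : 0 ≤ b) (hba : b ≤ a) :
    0 ≤ a * x / y - b * x / (y + 1) :=
  sub_nonneg.mpr <| calc
    b * x / (y + 1) ≤ b * x / y := by gcongr; linarith
    _ ≤ a * x / y := by gcongr

theorem div_le_div_sub_one {x y : ℝ} (hx : 0 ≤ x) (hy : 1 < y) : x / y ≤ x / (y - 1) :=
  div_le_div_of_nonneg_left hx (by linarith) (by linarith)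

theorem mul_div_sub_mul_div_add_one_sub_div_add_div_sub_one {x y a b : ℝ}
    (h0 : y ≠ 0) (hp : y + 1 ≠ 0) (hm : y - 1 ≠ 0) :
    a * x / y - b * x / (y + 1) - x / y + x / (y - 1)
      = x / y * (a - b + b / (y + 1) + 1 / (y - 1)) := by
  field_simp
  ring

theorem sis_ratio_drift_general
    (N X1 X2 : ℕ) (lam1 lam2 : ℝ) (hlam2 : 0 < lam2)
    (hX2 : 2 ≤ X2) (hsum : X1 + X2 ≤ N) :
    ratioDrift N X1 X2 lam1 lam2
        = (1 - (X1 : ℝ) / N - (X2 : ℝ) / N)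
            * (lam1 * X1 / X2 - lam2 * X1 / ((X2 : ℝ) + 1))
          - (X1 : ℝ) / X2 + (X1 : ℝ) / ((X2 : ℝ) - 1) ∧
    (lam2 < lam1 →
      0 ≤ ratioDrift N X1 X2 lam1 lam2 ∧
      ratioDrift N X1 X2 lam1 lam2
        ≤ ((X1 : ℝ) / X2) * (lam1 - lam2 + lam2 / ((X2 : ℝ) + 1) + 1 / ((X2 : ℝ) - 1))) := by
  have hX2' : (2 : ℝ) ≤ X2 := by exact_mod_cast hX2
  have heq := ratioDrift_eq N X1 X2 lam1 lam2 hX2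
  refine ⟨heq, fun hlt => ?_⟩
  have hS0 := one_sub_div_sub_div_nonneg hsum
  have hS1 := one_sub_div_sub_div_le_one N X1 X2
  have hinf := mul_div_sub_mul_div_add_one_nonneg (y := X2) (Nat.cast_nonneg X1) (by linarith)
    hlam2.le hlt.le
  have hrec := div_le_div_sub_one (Nat.cast_nonneg X1) (by linarith : (1 : ℝ) < X2)
  rw [heq, ← mul_div_sub_mul_div_add_one_sub_div_add_div_sub_one (by linarith) (by linarith)
    (by linarith)]
  exact ⟨by linarith [mul_nonneg hS0 hinf], by linarith [mul_le_mul_of_nonneg_right hS1 hinf]⟩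

/-- Drift of the ratio `Q = X₁/X₂` in the two-strain SIS competition chain with
`μ₁ = μ₂ = 1`: at a state with `X₂ ≥ 2` and `X₁ + X₂ ≤ N` the generator applied to `Q`
equals `(1 - X₁/N - X₂/N)(λ₁X₁/X₂ - λ₂X₁/(X₂+1)) - X₁/X₂ + X₁/(X₂-1)`; moreover, if
`λ₁ > λ₂` then it is nonnegative and at most
`(X₁/X₂)(λ₁ - λ₂ + λ₂/(X₂+1) + 1/(X₂-1))`. -/
theorem sis_ratio_drift
    (N X1 X2 : ℕ) (lam1 lam2 : ℝ) (hN : 0 < N) (hlam2 : 0 < lam2)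
    (hX2 : 2 ≤ X2) (hsum : X1 + X2 ≤ N) :
    ratioDrift N X1 X2 lam1 lam2
        = (1 - (X1 : ℝ) / N - (X2 : ℝ) / N)
            * (lam1 * X1 / X2 - lam2 * X1 / ((X2 : ℝ) + 1))
          - (X1 : ℝ) / X2 + (X1 : ℝ) / ((X2 : ℝ) - 1) ∧
    (lam2 < lam1 →
      0 ≤ ratioDrift N X1 X2 lam1 lam2 ∧
      ratioDrift N X1 X2 lam1 lam2
        ≤ ((X1 : ℝ) / X2) * (lam1 - lam2 + lam2 / ((X2 : ℝ) + 1) + 1 / ((X2 : ℝ) - 1))) :=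
  sis_ratio_drift_general N X1 X2 lam1 lam2 hlam2 hX2 hsum
end
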